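/- arXiv:2210.00360 — 8 statements merged into one kernel-verified Lean document; each statement's English description precedes it below -/
import Mathlib

section
/- lim_{n→∞} A_n / n = B_∞; equivalently, lim_{n→∞} (1/n)·inf_{k≥1} A_{n,k} = lim_{k→∞} inf_{n≥1} A_{n,k}/n. -/
open Finset Filter Topology

/-- The Diananda sum `S_{n,k}(x) = Σ_{i=1}^n k·x_i/(x_{i+1}+…+x_{i+k})`. -/
noncomputable def Snk (n k : ℕ) (x : ℤ → ℝ) : ℝ :=
  ∑ i ∈ Finset.Icc (1 : ℤ) (n : ℤ),
    (k : ℝ) * x i / (∑ j ∈ Finset.Icc (1 : ℤ) (k : ℤ), x (i + j))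

/-- `A_{n,k}`: infimum of `S_{n,k}(x)` over nonnegative `n`-periodic `x`
with all denominators positive. -/
noncomputable def Ank (n k : ℕ) : ℝ :=
  sInf {t : ℝ | ∃ x : ℤ → ℝ, (∀ i, 0 ≤ x i) ∧ (∀ i, x (i + (n : ℤ)) = x i) ∧
    (∀ i : ℤ, 0 < ∑ j ∈ Finset.Icc (1 : ℤ) (k : ℤ), x (i + j)) ∧ t = Snk n k x}

/-- `B_k = inf_{n ≥ 1} A_{n,k}/n`. -/
noncomputable def Bk (k : ℕ) : ℝ :=
  sInf {t : ℝ | ∃ n : ℕ, 1 ≤ n ∧ t = Ank n k / n}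

/-- `A_n = inf_{k ≥ 1} A_{n,k}`. -/
noncomputable def An (n : ℕ) : ℝ :=
  sInf {t : ℝ | ∃ k : ℕ, 1 ≤ k ∧ t = Ank n k}

/-! ### Auxiliary definitions -/

/-- Window sum of length `k` after position `i`. -/
noncomputable def Wd (k : ℕ) (x : ℤ → ℝ) (i : ℤ) : ℝ :=
  ∑ j ∈ Finset.Icc (1 : ℤ) (k : ℤ), x (i + j)

/-- Feasibility predicate. -/
def Feas (n k : ℕ) (x : ℤ → ℝ) : Prop :=
  (∀ i, 0 ≤ x i) ∧ (∀ i, x (i + (n : ℤ)) = x i) ∧ (∀ i : ℤ, 0 < Wd k x i)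

lemma Ank_eq (n k : ℕ) : Ank n k = sInf {t : ℝ | ∃ x, Feas n k x ∧ t = Snk n k x} := by
  unfold Ank Feas Wd
  congr 1
  ext t
  constructor
  · rintro ⟨x, h1, h2, h3, h4⟩; exact ⟨x, ⟨h1, h2, h3⟩, h4⟩
  · rintro ⟨x, ⟨h1, h2, h3⟩, h4⟩; exact ⟨x, h1, h2, h3, h4⟩

/-! ### Sums over integer intervals -/

lemma sum_Ioc_consec (f : ℤ → ℝ) {a b c : ℤ} (h1 : a ≤ b) (h2 : b ≤ c) :
    (∑ i ∈ Ioc a b, f i) + ∑ i ∈ Ioc b c, f i = ∑ i ∈ Ioc a c, f i := by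
  rw [← Ioc_union_Ioc_eq_Ioc h1 h2, Finset.sum_union]
  rw [Finset.disjoint_left]
  intro i hi hi'
  simp only [Finset.mem_Ioc] at hi hi'
  omega

lemma Icc_one_eq_Ioc (n : ℤ) : Finset.Icc (1:ℤ) n = Finset.Ioc 0 n := by
  ext i; simp [Int.lt_iff_add_one_le]

lemma Ioc_singleton (a : ℤ) : Finset.Ioc a (a+1) = {a+1} := by
  ext i; simp; omega

lemma sum_shift (f : ℤ → ℝ) (a b c : ℤ) :
    ∑ i ∈ Ioc a b, f (i + c) = ∑ i ∈ Ioc (a+c) (b+c), f i := by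
  rw [← Finset.map_add_right_Ioc, Finset.sum_map]
  rfl

/-- Periodicity extended to integer multiples. -/
lemma per_int (x : ℤ → ℝ) (m : ℤ) (hx : ∀ i, x (i + m) = x i) :
    ∀ (q : ℤ) (i : ℤ), x (i + q * m) = x i := by
  intro q
  induction q using Int.induction_on with
  | zero => simp
  | succ q ih => intro i
                 have : i + (q+1)*m = (i + m) + q * m := by ring
                 rw [this, ih, hx]
  | pred q ih => intro i
                 have h1 := hx (i + (-(q:ℤ)-1)*m)
                 have h2 : i + (-(q:ℤ)-1)*m + m = i + (-(q:ℤ))*m := by ring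
                 rw [h2] at h1
                 rw [← h1, ih]

lemma per_reduce (x : ℤ → ℝ) (m : ℤ) (hm : 1 ≤ m) (hx : ∀ i, x (i + m) = x i) (i : ℤ) :
    ∃ s, 1 ≤ s ∧ s ≤ m ∧ x i = x s := by
  refine ⟨(i-1) % m + 1, ?_, ?_, ?_⟩
  · have := Int.emod_nonneg (i-1) (by omega : m ≠ 0); omega
  · have := Int.emod_lt_of_pos (i-1) (by omega : 0 < m); omega
  · have h := Int.mul_ediv_add_emod (i-1) m
    have h' : (i-1)/m * m = m * ((i-1)/m) := mul_comm _ _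
    have hi : i = ((i-1) % m + 1) + ((i-1)/m) * m := by omega
    conv_lhs => rw [hi]
    exact per_int x m hx _ _

/-- one-step shift invariance of a full-period sum. -/
lemma sum_per_step (f : ℤ → ℝ) (m : ℤ) (hm : 1 ≤ m) (hf : ∀ i, f (i + m) = f i) (c : ℤ) :
    ∑ i ∈ Ioc 0 m, f (i + (c+1)) = ∑ i ∈ Ioc 0 m, f (i + c) := by
  have e1 : ∑ i ∈ Ioc 0 m, f (i + (c+1)) = ∑ i ∈ Ioc 1 (m+1), f (i + c) := by
    have := sum_shift (fun i => f (i + c)) 0 m 1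
    simp only [zero_add] at this
    rw [← this]
    apply Finset.sum_congr rfl
    intro i _
    congr 1; ring
  rw [e1]
  have s1 : (∑ i ∈ Ioc 0 1, f (i+c)) + ∑ i ∈ Ioc 1 m, f (i+c) = ∑ i ∈ Ioc 0 m, f (i+c) :=
    sum_Ioc_consec _ (by omega) hm
  have s2 : (∑ i ∈ Ioc 1 m, f (i+c)) + ∑ i ∈ Ioc m (m+1), f (i+c) = ∑ i ∈ Ioc 1 (m+1), f (i+c) :=
    sum_Ioc_consec _ hm (by omega)
  have e2 : ∑ i ∈ Ioc 0 1, f (i+c) = f (1+c) := by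
    rw [show (1:ℤ) = 0 + 1 from rfl, Ioc_singleton, Finset.sum_singleton]
  have e3 : ∑ i ∈ Ioc m (m+1), f (i+c) = f (1+c) := by
    rw [Ioc_singleton, Finset.sum_singleton]
    have : m + 1 + c = (1 + c) + m := by ring
    rw [this, hf]
  rw [← s1, e2, ← s2, e3]
  ring

/-- Shift invariance of a full-period sum. -/
lemma sum_per_shift (f : ℤ → ℝ) (m : ℤ) (hm : 1 ≤ m) (hf : ∀ i, f (i + m) = f i) (c : ℤ) :
    ∑ i ∈ Ioc 0 m, f (i + c) = ∑ i ∈ Ioc 0 m, f i := by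
  induction c using Int.induction_on with
  | zero => simp
  | succ c ih => rw [sum_per_step f m hm hf c, ih]
  | pred c ih =>
    have h := sum_per_step f m hm hf (-(c:ℤ)-1)
    have e : ∀ i : ℤ, i + (-(c:ℤ)-1+1) = i + (-(c:ℤ)) := by intro i; ring
    have h2 : ∑ i ∈ Ioc 0 m, f (i + (-(c:ℤ)-1+1)) = ∑ i ∈ Ioc 0 m, f (i + (-(c:ℤ))) := by
      apply Finset.sum_congr rfl; intro i _; rw [e i]
    rw [h2] at h
    rw [← h, ih]

/-- Block decomposition of a sum over `Ioc 0 (c*n)`. -/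
lemma sum_block (f : ℤ → ℝ) (c : ℤ) (hc : 1 ≤ c) (n : ℕ) :
    ∑ i ∈ Ioc 0 (c * (n:ℤ)), f i = ∑ a ∈ Finset.range n, ∑ b ∈ Ioc 0 c, f (c * (a:ℤ) + b) := by
  induction n with
  | zero => simp
  | succ n ih =>
    have key : (∑ i ∈ Ioc 0 (c*(n:ℤ)), f i) + ∑ i ∈ Ioc (c*(n:ℤ)) (c*(n:ℤ)+c), f i
        = ∑ i ∈ Ioc 0 (c*((n:ℤ)+1)), f i := by
      have := sum_Ioc_consec f (by positivity : (0:ℤ) ≤ c*(n:ℤ)) (by omega : c*(n:ℤ) ≤ c*(n:ℤ)+c)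
      rw [this]
      congr 1
      ring
    have e2 : ∑ i ∈ Ioc (c*(n:ℤ)) (c*(n:ℤ)+c), f i = ∑ b ∈ Ioc 0 c, f (c * (n:ℤ) + b) := by
      have h2 := sum_shift (fun i => f i) 0 c (c*(n:ℤ))
      simp only [zero_add] at h2
      rw [show c*(n:ℤ) + c = c + c*(n:ℤ) by ring, ← h2]
      apply Finset.sum_congr rfl
      intro b _
      show f (b + c * (n:ℤ)) = f (c * (n:ℤ) + b)
      congr 1; ring
    rw [show ((n+1:ℕ):ℤ) = (n:ℤ)+1 by push_cast; ring, Finset.sum_range_succ, ← ih, ← e2, ← key]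

/-- Sum of an `m`-periodic function over `q` periods. -/
lemma sum_per_mul (f : ℤ → ℝ) (m : ℕ) (hm : 1 ≤ m) (hf : ∀ i, f (i + (m:ℤ)) = f i) (q : ℕ) :
    ∑ i ∈ Ioc 0 ((q*m : ℕ) : ℤ), f i = q * ∑ i ∈ Ioc 0 (m:ℤ), f i := by
  have hm' : (1:ℤ) ≤ m := by exact_mod_cast hm
  have : ((q*m:ℕ):ℤ) = (m:ℤ) * (q:ℤ) := by push_cast; ring
  rw [this, sum_block f m hm' q]
  have : ∀ a ∈ Finset.range q, ∑ b ∈ Ioc 0 (m:ℤ), f ((m:ℤ) * a + b) = ∑ b ∈ Ioc 0 (m:ℤ), f b := by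
    intro a _
    apply Finset.sum_congr rfl
    intro b _
    have : (m:ℤ) * a + b = b + a * m := by ring
    rw [this, per_int f m hf]
  rw [Finset.sum_congr rfl this, Finset.sum_const, Finset.card_range, nsmul_eq_mul]

/-! ### Basic facts about `Ank`, `Bk`, `An` -/

lemma Wd_nonneg (k : ℕ) (x : ℤ → ℝ) (hx : ∀ i, 0 ≤ x i) (i : ℤ) : 0 ≤ Wd k x i :=
  Finset.sum_nonneg fun j _ => hx _

lemma Snk_nonneg (n k : ℕ) (x : ℤ → ℝ) (hx : ∀ i, 0 ≤ x i) : 0 ≤ Snk n k x := by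
  apply Finset.sum_nonneg
  intro i _
  apply div_nonneg
  · have := hx i
    positivity
  · exact Finset.sum_nonneg fun j _ => hx _

lemma Ank_bddBelow (n k : ℕ) : BddBelow {t : ℝ | ∃ x, Feas n k x ∧ t = Snk n k x} := by
  refine ⟨0, ?_⟩
  rintro t ⟨x, hx, rfl⟩
  exact Snk_nonneg n k x hx.1

lemma Ank_le_Snk (n k : ℕ) (x : ℤ → ℝ) (hx : Feas n k x) : Ank n k ≤ Snk n k x := by
  rw [Ank_eq]
  exact csInf_le (Ank_bddBelow n k) ⟨x, hx, rfl⟩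

lemma Ank_nonneg (n k : ℕ) : 0 ≤ Ank n k := by
  rw [Ank_eq]
  apply Real.sInf_nonneg
  rintro t ⟨x, hx, rfl⟩
  exact Snk_nonneg n k x hx.1

lemma Feas_one (n k : ℕ) (hk : 1 ≤ k) : Feas n k (fun _ => 1) := by
  refine ⟨fun _ => zero_le_one, fun _ => rfl, fun i => ?_⟩
  unfold Wd
  rw [Finset.sum_const]
  simp only [nsmul_eq_mul, mul_one]
  have : (Finset.Icc (1:ℤ) (k:ℤ)).card = k := by
    rw [Int.card_Icc]
    simp
  rw [this]
  exact_mod_cast hk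

lemma AnkSet_nonempty (n k : ℕ) (hk : 1 ≤ k) :
    {t : ℝ | ∃ x, Feas n k x ∧ t = Snk n k x}.Nonempty :=
  ⟨_, (fun _ => 1), Feas_one n k hk, rfl⟩

/-- If `A' ≤ Snk x + c` for all feasible `x`, then `A' ≤ Ank n k + c`. -/
lemma le_Ank_add (n k : ℕ) (hk : 1 ≤ k) (A' c : ℝ)
    (h : ∀ x, Feas n k x → A' ≤ Snk n k x + c) : A' ≤ Ank n k + c := by
  have : A' - c ≤ Ank n k := by
    rw [Ank_eq]
    apply le_csInf (AnkSet_nonempty n k hk)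
    rintro t ⟨x, hx, rfl⟩
    linarith [h x hx]
  linarith

lemma Bk_eq (k : ℕ) : Bk k = sInf {t : ℝ | ∃ n : ℕ, 1 ≤ n ∧ t = Ank n k / n} := rfl

lemma Bk_le (k n : ℕ) (hn : 1 ≤ n) : Bk k ≤ Ank n k / n := by
  apply csInf_le
  · refine ⟨0, ?_⟩
    rintro t ⟨n', hn', rfl⟩
    have := Ank_nonneg n' k
    positivity
  · exact ⟨n, hn, rfl⟩

lemma Bk_nonneg (k : ℕ) : 0 ≤ Bk k := by
  apply Real.sInf_nonneg
  rintro t ⟨n', hn', rfl⟩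
  have := Ank_nonneg n' k
  positivity

lemma exists_Ank_near (k : ℕ) (c : ℝ) (h : Bk k < c) : ∃ n : ℕ, 1 ≤ n ∧ Ank n k / n < c := by
  have hne : {t : ℝ | ∃ n : ℕ, 1 ≤ n ∧ t = Ank n k / n}.Nonempty := ⟨Ank 1 k / (1:ℕ), 1, le_refl 1, rfl⟩
  obtain ⟨t, ⟨n, hn, rfl⟩, ht⟩ := exists_lt_of_csInf_lt hne h
  exact ⟨n, hn, ht⟩

lemma An_le (n k : ℕ) (hk : 1 ≤ k) : An n ≤ Ank n k := by
  unfold An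
  apply csInf_le
  · refine ⟨0, ?_⟩
    rintro t ⟨k', hk', rfl⟩
    exact Ank_nonneg n k'
  · exact ⟨k, hk, rfl⟩

lemma le_An (n : ℕ) (c : ℝ) (h : ∀ k, 1 ≤ k → c ≤ Ank n k) : c ≤ An n := by
  unfold An
  have hne : {t : ℝ | ∃ k : ℕ, 1 ≤ k ∧ t = Ank n k}.Nonempty := ⟨Ank n 1, 1, le_refl 1, rfl⟩
  apply le_csInf hne
  rintro t ⟨k, hk, rfl⟩
  exact h k hk

/-! ### Replication in `n` -/

lemma Snk_eq (n k : ℕ) (x : ℤ → ℝ) :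
    Snk n k x = ∑ i ∈ Ioc 0 (n:ℤ), (k : ℝ) * x i / Wd k x i := by
  unfold Snk Wd
  rw [Icc_one_eq_Ioc]

lemma Wd_per (n k : ℕ) (x : ℤ → ℝ) (hx : ∀ i, x (i + (n:ℤ)) = x i) (i : ℤ) :
    Wd k x (i + (n:ℤ)) = Wd k x i := by
  unfold Wd
  apply Finset.sum_congr rfl
  intro j _
  rw [show i + (n:ℤ) + j = (i + j) + (n:ℤ) by ring, hx]

lemma Feas_rep (n k q : ℕ) (x : ℤ → ℝ) (hx : Feas n k x) : Feas (q*n) k x := by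
  obtain ⟨h1, h2, h3⟩ := hx
  refine ⟨h1, fun i => ?_, h3⟩
  rw [show ((q*n : ℕ):ℤ) = (q:ℤ) * (n:ℤ) by push_cast; ring]
  exact per_int x n h2 q i

lemma Snk_rep (n k q : ℕ) (hn : 1 ≤ n) (x : ℤ → ℝ) (hx : ∀ i, x (i + (n:ℤ)) = x i) :
    Snk (q*n) k x = q * Snk n k x := by
  rw [Snk_eq, Snk_eq]
  apply sum_per_mul _ n hn
  intro i
  rw [hx, Wd_per n k x hx]

lemma Ank_rep (n k q : ℕ) (hn : 1 ≤ n) (hk : 1 ≤ k) (hq : 1 ≤ q) :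
    Ank (q*n) k ≤ q * Ank n k := by
  have hq' : (0:ℝ) < q := by exact_mod_cast hq
  have h2 : Ank (q*n) k / q ≤ Ank n k := by
    rw [Ank_eq n k]
    apply le_csInf (AnkSet_nonempty n k hk)
    rintro t ⟨x, hx, rfl⟩
    rw [div_le_iff₀ hq']
    have := Ank_le_Snk (q*n) k x (Feas_rep n k q x hx)
    rw [Snk_rep n k q hn x hx.2.1] at this
    linarith
  rw [div_le_iff₀ hq'] at h2
  linarith

/-! ### Zero insertion: `B` is nonincreasing -/

/-- Insert a zero after every `k` entries of `x`. -/
noncomputable def yins (k : ℕ) (x : ℤ → ℝ) : ℤ → ℝ := fun i =>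
  if ((k:ℤ)+1) ∣ i then 0 else x ((k:ℤ) * (i / ((k:ℤ)+1)) + i % ((k:ℤ)+1))

lemma emod_helper (c a d : ℤ) (hc : 0 < c) (h1 : 0 ≤ d) (h2 : d < c) :
    (c*a + d) % c = d ∧ (c*a + d) / c = a := by
  constructor
  · rw [show c*a + d = d + a * c by ring, Int.add_mul_emod_self_right]
    exact Int.emod_eq_of_lt h1 h2
  · rw [show c*a + d = d + a * c by ring, Int.add_mul_ediv_right _ _ (by omega : c ≠ 0),
      Int.ediv_eq_zero_of_lt h1 h2, zero_add]

lemma yins_val_mul (k : ℕ) (x : ℤ → ℝ) (a : ℤ) : yins k x (((k:ℤ)+1)*a) = 0 := by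
  unfold yins
  rw [if_pos ⟨a, rfl⟩]

lemma yins_val (k : ℕ) (x : ℤ → ℝ) (a d : ℤ) (h1 : 1 ≤ d) (h2 : d ≤ (k:ℤ)) :
    yins k x (((k:ℤ)+1)*a + d) = x ((k:ℤ)*a + d) := by
  have hc : (0:ℤ) < (k:ℤ)+1 := by omega
  obtain ⟨hmod, hdiv⟩ := emod_helper ((k:ℤ)+1) a d hc (by omega) (by omega)
  unfold yins
  rw [if_neg, hmod, hdiv]
  intro hdvd
  have h0 : ((k:ℤ)+1) ∣ ((k:ℤ)+1)*a := ⟨a, rfl⟩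
  have : ((k:ℤ)+1) ∣ d := (dvd_add_right h0).mp hdvd
  have := Int.le_of_dvd (by omega) this
  omega

lemma yins_nonneg (k : ℕ) (x : ℤ → ℝ) (hx : ∀ i, 0 ≤ x i) (i : ℤ) : 0 ≤ yins k x i := by
  unfold yins
  split
  · exact le_refl 0
  · exact hx _

lemma yins_per (n k : ℕ) (x : ℤ → ℝ) (hx : ∀ i, x (i + (n:ℤ)) = x i) (i : ℤ) :
    yins k x (i + (((k:ℕ)+1:ℕ)*n : ℕ)) = yins k x i := by
  have hcast : ((((k:ℕ)+1)*n : ℕ) : ℤ) = ((k:ℤ)+1) * (n:ℤ) := by push_cast; ring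
  rw [hcast]
  set c : ℤ := (k:ℤ)+1 with hc
  have hc0 : c ≠ 0 := by omega
  have hdvd : c ∣ i + c * n ↔ c ∣ i := by
    constructor
    · intro h; have := (dvd_add_right (Dvd.intro _ rfl : c ∣ c * (n:ℤ))).mp (by rwa [add_comm] at h); exact this
    · intro h; exact dvd_add h ⟨n, rfl⟩
  unfold yins
  by_cases h : c ∣ i
  · rw [if_pos (hdvd.mpr h), if_pos h]
  · rw [if_neg (fun hh => h (hdvd.mp hh)), if_neg h]
    have hdiv : (i + c*(n:ℤ)) / c = i / c + n := by
      rw [show i + c*(n:ℤ) = i + (n:ℤ)*c by ring, Int.add_mul_ediv_right _ _ hc0]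
    have hmod : (i + c*(n:ℤ)) % c = i % c := by
      rw [show i + c*(n:ℤ) = i + (n:ℤ)*c by ring, Int.add_mul_emod_self_right]
    rw [hdiv, hmod]
    rw [show (k:ℤ) * (i/c + (n:ℤ)) + i % c = ((k:ℤ)*(i/c) + i % c) + (k:ℤ)*(n:ℤ) by ring]
    exact per_int x n hx k _

lemma yins_window (k : ℕ) (hk : 1 ≤ k) (x : ℤ → ℝ) (i : ℤ) :
    Wd (k+1) (yins k x) i = Wd k x ((k:ℤ) * (i / ((k:ℤ)+1)) + i % ((k:ℤ)+1)) := by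
  set c : ℤ := (k:ℤ)+1 with hcdef
  have hc : (0:ℤ) < c := by omega
  set a : ℤ := i / c with ha
  set b : ℤ := i % c with hb
  have hb0 : 0 ≤ b := Int.emod_nonneg i (by omega)
  have hbc : b < c := Int.emod_lt_of_pos i hc
  have hi : i = c*a + b := (Int.mul_ediv_add_emod i c).symm
  set t : ℤ := (k:ℤ)*a + b with ht
  set g : ℤ → ℝ := fun j => yins k x (i + j) with hg
  have hwd : Wd (k+1) (yins k x) i = ∑ j ∈ Ioc 0 c, g j := by
    unfold Wd
    rw [Icc_one_eq_Ioc, show (((k:ℕ)+1:ℕ):ℤ) = c by push_cast; omega]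
  have split1 : (∑ j ∈ Ioc 0 (c-b), g j) + ∑ j ∈ Ioc (c-b) c, g j = ∑ j ∈ Ioc 0 c, g j :=
    sum_Ioc_consec g (by omega) (by omega)
  have split2 : (∑ j ∈ Ioc 0 (c-b-1), g j) + ∑ j ∈ Ioc (c-b-1) (c-b), g j
      = ∑ j ∈ Ioc 0 (c-b), g j :=
    sum_Ioc_consec g (by omega) (by omega)
  have top : ∑ j ∈ Ioc (c-b-1) (c-b), g j = 0 := by
    have hsing : Ioc (c-b-1) (c-b) = ({c-b} : Finset ℤ) := by ext j; simp [Finset.mem_Ioc]; omega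
    rw [hsing, Finset.sum_singleton]
    show yins k x (i + (c-b)) = 0
    rw [show i + (c-b) = ((k:ℤ)+1)*(a+1) by rw [hi, hcdef]; ring]
    exact yins_val_mul k x (a+1)
  have S1 : ∀ j ∈ Ioc 0 (c-b-1), g j = x (t + j) := by
    intro j hj
    simp only [Finset.mem_Ioc] at hj
    show yins k x (i + j) = x (t + j)
    rw [show i + j = ((k:ℤ)+1)*a + (b+j) by rw [hi]; push_cast; ring]
    rw [yins_val k x a (b+j) (by omega) (by omega)]
    congr 1; rw [ht]; ring
  have S2 : ∀ j ∈ Ioc (c-b) c, g j = x (t + (j-1)) := by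
    intro j hj
    simp only [Finset.mem_Ioc] at hj
    show yins k x (i + j) = x (t + (j-1))
    rw [show i + j = ((k:ℤ)+1)*(a+1) + (b+j-c) by rw [hi]; push_cast; ring]
    rw [yins_val k x (a+1) (b+j-c) (by omega) (by omega), ht, hcdef]
    congr 1; ring
  have S2' : ∑ j ∈ Ioc (c-b) c, x (t + (j-1)) = ∑ j ∈ Ioc (c-b-1) (c-1), x (t+j) := by
    have := sum_shift (fun j => x (t + j)) (c-b) c (-1)
    rw [show c-b + (-1) = c-b-1 by ring, show c + (-1) = c-1 by ring] at this
    rw [← this]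
    apply Finset.sum_congr rfl
    intro j _
    congr 1 <;> ring_nf
  have final : (∑ j ∈ Ioc 0 (c-b-1), x (t+j)) + ∑ j ∈ Ioc (c-b-1) (c-1), x (t+j)
      = ∑ j ∈ Ioc 0 (c-1), x (t+j) :=
    sum_Ioc_consec _ (by omega) (by omega)
  have hwdx : Wd k x t = ∑ j ∈ Ioc 0 (c-1), x (t+j) := by
    unfold Wd
    rw [Icc_one_eq_Ioc, show ((k:ℕ):ℤ) = c-1 by omega]
  rw [hwd, ← split1, ← split2, top, Finset.sum_congr rfl S1, Finset.sum_congr rfl S2, S2',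
    add_zero, final, ← hwdx]

lemma yins_feas (n k : ℕ) (x : ℤ → ℝ) (hk : 1 ≤ k) (hx : Feas n k x) :
    Feas ((k+1)*n) (k+1) (yins k x) := by
  obtain ⟨h1, h2, h3⟩ := hx
  refine ⟨yins_nonneg k x h1, ?_, ?_⟩
  · intro i
    exact yins_per n k x h2 i
  · intro i
    have := yins_window k hk x i
    unfold Wd at this ⊢
    rw [this]
    exact h3 _

lemma Snk_yins (n k : ℕ) (hn : 1 ≤ n) (hk : 1 ≤ k) (x : ℤ → ℝ) (hx : Feas n k x) :
    Snk ((k+1)*n) (k+1) (yins k x) = ((k:ℝ)+1) * Snk n k x := by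
  have hk0 : (k:ℝ) ≠ 0 := by
    have : (0:ℝ) < k := by exact_mod_cast hk
    linarith
  set c : ℤ := (k:ℤ)+1 with hcdef
  have hc1 : (1:ℤ) ≤ c := by omega
  set G : ℤ → ℝ := fun t => ((k:ℝ)+1) * x t / Wd k x t with hG
  set F : ℤ → ℝ := fun i => ((k+1:ℕ):ℝ) * yins k x i / Wd (k+1) (yins k x) i with hF
  have step1 : Snk ((k+1)*n) (k+1) (yins k x) = ∑ i ∈ Ioc 0 (c * (n:ℤ)), F i := by
    rw [Snk_eq, show (((k+1)*n : ℕ):ℤ) = c * (n:ℤ) by push_cast; ring]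
  have inner : ∀ a : ℤ, ∑ b ∈ Ioc 0 c, F (c*a + b) = ∑ b ∈ Ioc 0 (k:ℤ), G ((k:ℤ)*a + b) := by
    intro a
    have split : (∑ b ∈ Ioc 0 (c-1), F (c*a+b)) + ∑ b ∈ Ioc (c-1) c, F (c*a+b)
        = ∑ b ∈ Ioc 0 c, F (c*a+b) := sum_Ioc_consec _ (by omega) (by omega)
    have top : ∑ b ∈ Ioc (c-1) c, F (c*a+b) = 0 := by
      have hsing : Ioc (c-1) c = ({c} : Finset ℤ) := by ext j; simp [Finset.mem_Ioc]; omega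
      rw [hsing, Finset.sum_singleton]
      show ((k+1:ℕ):ℝ) * yins k x (c*a+c) / Wd (k+1) (yins k x) (c*a+c) = 0
      rw [show c*a+c = ((k:ℤ)+1)*(a+1) by rw [hcdef]; ring, yins_val_mul k x (a+1), mul_zero,
        zero_div]
    have main : ∀ b ∈ Ioc 0 (c-1), F (c*a+b) = G ((k:ℤ)*a + b) := by
      intro b hb
      simp only [Finset.mem_Ioc] at hb
      obtain ⟨hmod, hdiv⟩ := emod_helper c a b (by omega) (by omega) (by omega)
      show ((k+1:ℕ):ℝ) * yins k x (c*a+b) / Wd (k+1) (yins k x) (c*a+b) = G ((k:ℤ)*a + b)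
      rw [show c*a+b = ((k:ℤ)+1)*a + b from by rw [hcdef],
        yins_val k x a b (by omega) (by omega)]
      have hw : Wd (k+1) (yins k x) (((k:ℤ)+1)*a + b) = Wd k x ((k:ℤ)*a + b) := by
        rw [yins_window k hk x]
        have h1 : (((k:ℤ)+1)*a + b) / ((k:ℤ)+1) = a := by rw [← hcdef] at *; exact hdiv
        have h2 : (((k:ℤ)+1)*a + b) % ((k:ℤ)+1) = b := by rw [← hcdef] at *; exact hmod
        rw [h1, h2]
      rw [hw, hG]
      push_cast
      rfl
    have hIoc : Ioc (0:ℤ) (c-1) = Ioc 0 (k:ℤ) := by rw [hcdef]; congr 1; ring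
    rw [← split, top, add_zero, Finset.sum_congr rfl main, hIoc]
  have hGper : ∀ t, G (t + (n:ℤ)) = G t := by
    intro t
    rw [hG]
    show ((k:ℝ)+1) * x (t + n) / Wd k x (t + n) = ((k:ℝ)+1) * x t / Wd k x t
    rw [hx.2.1 t, Wd_per n k x hx.2.1 t]
  have step2 : ∑ i ∈ Ioc 0 (c * (n:ℤ)), F i = ∑ i ∈ Ioc 0 ((k:ℤ) * (n:ℤ)), G i := by
    rw [sum_block F c hc1 n, sum_block G (k:ℤ) (by exact_mod_cast hk) n]
    apply Finset.sum_congr rfl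
    intro a _
    exact inner a
  have step3 : ∑ i ∈ Ioc 0 ((k:ℤ) * (n:ℤ)), G i = (k:ℝ) * ∑ i ∈ Ioc 0 (n:ℤ), G i := by
    rw [show (k:ℤ) * (n:ℤ) = ((k*n : ℕ):ℤ) by push_cast; ring]
    exact sum_per_mul G n hn hGper k
  have step4 : ∑ i ∈ Ioc 0 (n:ℤ), G i = ((k:ℝ)+1)/(k:ℝ) * Snk n k x := by
    rw [Snk_eq, Finset.mul_sum]
    apply Finset.sum_congr rfl
    intro i _
    show ((k:ℝ)+1) * x i / Wd k x i = ((k:ℝ)+1)/(k:ℝ) * ((k:ℝ) * x i / Wd k x i)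
    rw [mul_div_assoc, mul_div_assoc, ← mul_assoc, div_mul_cancel₀ _ hk0]
  rw [step1, step2, step3, step4, ← mul_assoc, mul_div_cancel₀ _ hk0]

lemma Ank_ins (n k : ℕ) (hn : 1 ≤ n) (hk : 1 ≤ k) :
    Ank ((k+1)*n) (k+1) ≤ ((k:ℝ)+1) * Ank n k := by
  have hkp : (0:ℝ) < (k:ℝ)+1 := by positivity
  have h2 : Ank ((k+1)*n) (k+1) / ((k:ℝ)+1) ≤ Ank n k := by
    rw [Ank_eq n k]
    apply le_csInf (AnkSet_nonempty n k hk)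
    rintro t ⟨x, hxf, rfl⟩
    rw [div_le_iff₀ hkp]
    have h3 := Ank_le_Snk ((k+1)*n) (k+1) (yins k x) (yins_feas n k x hk hxf)
    rw [Snk_yins n k hn hk x hxf] at h3
    linarith
  rw [div_le_iff₀ hkp] at h2
  linarith

lemma Bk_mono (k : ℕ) (hk : 1 ≤ k) : Bk (k+1) ≤ Bk k := by
  rw [Bk_eq k]
  have hne : {t : ℝ | ∃ n : ℕ, 1 ≤ n ∧ t = Ank n k / n}.Nonempty :=
    ⟨Ank 1 k / (1:ℕ), 1, le_refl 1, rfl⟩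
  apply le_csInf hne
  rintro t ⟨n, hn, rfl⟩
  have hkp : (0:ℝ) < (k:ℝ)+1 := by positivity
  have h1 : Bk (k+1) ≤ Ank ((k+1)*n) (k+1) / (((k+1)*n : ℕ):ℝ) :=
    Bk_le (k+1) ((k+1)*n) (Nat.mul_pos (Nat.succ_pos k) hn)
  have hd : (0:ℝ) < (((k+1)*n : ℕ):ℝ) := by
    have : 0 < (k+1)*n := Nat.mul_pos (Nat.succ_pos k) hn
    exact_mod_cast this
  have hAB : Ank ((k+1)*n) (k+1) ≤ ((k:ℝ)+1) * Ank n k := Ank_ins n k hn hk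
  have h2 : Ank ((k+1)*n) (k+1) / (((k+1)*n : ℕ):ℝ)
      ≤ (((k:ℝ)+1) * Ank n k) / (((k+1)*n : ℕ):ℝ) := by gcongr
  have h3 : (((k:ℝ)+1) * Ank n k) / (((k+1)*n : ℕ):ℝ) = Ank n k / (n:ℝ) := by
    rw [show (((k+1)*n : ℕ):ℝ) = ((k:ℝ)+1) * (n:ℝ) by push_cast; ring]
    rw [mul_div_mul_left _ _ (ne_of_gt hkp)]
  linarith

lemma Bk_anti (k j : ℕ) (hk : 1 ≤ k) (hkj : k ≤ j) : Bk j ≤ Bk k := by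
  induction j, hkj using Nat.le_induction with
  | base => exact le_refl _
  | succ j hkj ih => exact le_trans (Bk_mono j (le_trans hk hkj)) ih

lemma Binf_le_Bk (Binf : ℝ) (hB : Tendsto (fun k : ℕ => Bk k) atTop (𝓝 Binf))
    (k : ℕ) (hk : 1 ≤ k) : Binf ≤ Bk k :=
  le_of_tendsto hB (Filter.eventually_atTop.mpr ⟨k, fun j hj => Bk_anti k j hk hj⟩)

lemma Binf_le_div (Binf : ℝ) (hB : Tendsto (fun k : ℕ => Bk k) atTop (𝓝 Binf))
    (n : ℕ) (hn : 1 ≤ n) : Binf ≤ An n / n := by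
  have hn' : (0:ℝ) < n := by exact_mod_cast hn
  have key : (n:ℝ) * Binf ≤ An n := by
    apply le_An
    intro k hk
    have h1 : Bk k ≤ Ank n k / n := Bk_le k n hn
    have h2 : Binf ≤ Bk k := Binf_le_Bk Binf hB k hk
    have h3 : (n:ℝ) * Bk k ≤ Ank n k := by
      rw [le_div_iff₀ hn'] at h1
      linarith [h1]
    nlinarith
  rw [le_div_iff₀ hn']
  linarith

/-! ### Extension by a filler block -/

lemma Wd_shift (k : ℕ) (x : ℤ → ℝ) (i0 i : ℤ) :
    Wd k (fun t => x (t + i0)) i = Wd k x (i + i0) := by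
  unfold Wd
  apply Finset.sum_congr rfl
  intro j _
  show x (i + j + i0) = x (i + i0 + j)
  congr 1; ring

lemma exists_shift (m k : ℕ) (hm : 1 ≤ m) (x : ℤ → ℝ) (hx : Feas m k x) :
    ∃ x', Feas m k x' ∧ Snk m k x' = Snk m k x ∧ (∀ i, Wd k x' i ≤ Wd k x' 0) := by
  have hne : (Finset.Icc (1:ℤ) (m:ℤ)).Nonempty := ⟨1, by simp; exact_mod_cast hm⟩
  obtain ⟨i0, hi0mem, hi0max⟩ := Finset.exists_max_image (Finset.Icc (1:ℤ) (m:ℤ)) (Wd k x) hne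
  have hWper : ∀ i, Wd k x (i + (m:ℤ)) = Wd k x i := Wd_per m k x hx.2.1
  have hWmax : ∀ i, Wd k x i ≤ Wd k x i0 := by
    intro i
    obtain ⟨s, hs1, hs2, hs3⟩ := per_reduce (fun t => Wd k x t) (m:ℤ)
      (by exact_mod_cast hm) hWper i
    rw [hs3]
    exact hi0max s (by simp [Finset.mem_Icc]; omega)
  refine ⟨fun t => x (t + i0), ⟨fun i => hx.1 _, fun i => ?_, fun i => ?_⟩, ?_, ?_⟩
  · show x (i + (m:ℤ) + i0) = x (i + i0)
    rw [show i + (m:ℤ) + i0 = (i + i0) + (m:ℤ) by ring, hx.2.1]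
  · show 0 < Wd k (fun t => x (t + i0)) i
    rw [Wd_shift]
    exact hx.2.2 _
  · rw [Snk_eq, Snk_eq]
    have : ∀ i ∈ Ioc (0:ℤ) (m:ℤ),
        (k:ℝ) * x (i + i0) / Wd k (fun t => x (t + i0)) i
        = (fun t => (k:ℝ) * x t / Wd k x t) (i + i0) := by
      intro i _
      rw [Wd_shift]
    rw [Finset.sum_congr rfl this]
    have hper : ∀ t, (fun t => (k:ℝ) * x t / Wd k x t) (t + (m:ℤ))
        = (fun t => (k:ℝ) * x t / Wd k x t) t := by
      intro t
      show (k:ℝ) * x (t + m) / Wd k x (t + m) = (k:ℝ) * x t / Wd k x t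
      rw [hx.2.1 t, hWper t]
    exact sum_per_shift (fun t => (k:ℝ) * x t / Wd k x t) (m:ℤ) (by exact_mod_cast hm) hper i0
  · intro i
    rw [Wd_shift, Wd_shift, zero_add]
    exact hWmax (i + i0)

lemma Snk_ext_core (m k r : ℕ) (hm : 1 ≤ m) (hk : 1 ≤ k) (hr : k ≤ r)
    (x : ℤ → ℝ) (hx : Feas m k x) (hmax : ∀ i, Wd k x i ≤ Wd k x 0) :
    Ank (m + r) k ≤ Snk m k x + 2*(k:ℝ)*(r:ℝ) := by
  obtain ⟨hx0, hxper, hxpos⟩ := hx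
  have hm' : (1:ℤ) ≤ (m:ℤ) := by exact_mod_cast hm
  have hk' : (1:ℤ) ≤ (k:ℤ) := by exact_mod_cast hk
  have hr' : (k:ℤ) ≤ (r:ℤ) := by exact_mod_cast hr
  set NZ : ℤ := (m:ℤ) + (r:ℤ) with hNZdef
  have hcast : ((m+r:ℕ):ℤ) = NZ := by push_cast; ring
  have hNZ : 0 < NZ := by omega
  set W0 : ℝ := Wd k x 0 with hW0def
  have hW0 : 0 < W0 := hxpos 0
  set y : ℤ → ℝ := fun i =>
    if (i-1) % NZ < (m:ℤ) then x ((i-1) % NZ + 1) else (2:ℝ)^(NZ - 1 - (i-1)%NZ) * W0 with hy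
  -- evaluation lemmas
  have hev1 : ∀ i : ℤ, 1 ≤ i → i ≤ (m:ℤ) → y i = x i := by
    intro i h1 h2
    simp only [hy]
    rw [Int.emod_eq_of_lt (by omega) (by omega), if_pos (by omega)]
    congr 1; omega
  have hev2 : ∀ i : ℤ, (m:ℤ)+1 ≤ i → i ≤ NZ → y i = (2:ℝ)^(NZ - i) * W0 := by
    intro i h1 h2
    simp only [hy]
    rw [Int.emod_eq_of_lt (by omega) (by omega), if_neg (by omega)]
    congr 2; omega
  have hev3 : ∀ i : ℤ, NZ+1 ≤ i → i ≤ NZ + (m:ℤ) → y i = x (i - NZ) := by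
    intro i h1 h2
    simp only [hy]
    rw [show i - 1 = (i-1-NZ) + NZ*1 by ring, Int.add_mul_emod_self_left]
    rw [Int.emod_eq_of_lt (by omega) (by omega), if_pos (by omega)]
    congr 1; omega
  have hev4 : y (NZ + (m:ℤ) + 1) = (2:ℝ)^((r:ℤ) - 1) * W0 := by
    simp only [hy]
    rw [show NZ + (m:ℤ) + 1 - 1 = (m:ℤ) + NZ*1 by ring, Int.add_mul_emod_self_left]
    rw [Int.emod_eq_of_lt (by omega) (by omega), if_neg (by omega)]
    congr 2; omega
  have hpow_ge : ∀ t : ℤ, 0 ≤ t → W0 ≤ (2:ℝ)^t * W0 := by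
    intro t ht
    have h1 : (1:ℝ) ≤ (2:ℝ)^t := by
      rw [show t = (t.toNat : ℤ) by omega, zpow_natCast]
      exact one_le_pow₀ one_le_two
    nlinarith
  have hynn : ∀ i, 0 ≤ y i := by
    intro i
    simp only [hy]
    split
    · exact hx0 _
    · have h2 : (0:ℝ) < (2:ℝ)^(NZ - 1 - (i-1)%NZ) := zpow_pos (by norm_num) _
      nlinarith
  have hyper : ∀ i, y (i + NZ) = y i := by
    intro i
    simp only [hy]
    rw [show i + NZ - 1 = (i-1) + NZ*1 by ring, Int.add_mul_emod_self_left]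
  have hfill_ge : ∀ i : ℤ, (m:ℤ)+1 ≤ i → i ≤ NZ → W0 ≤ y i := by
    intro i h1 h2
    rw [hev2 i h1 h2]
    exact hpow_ge _ (by omega)
  have hWdIoc : ∀ (z : ℤ → ℝ) (i : ℤ), Wd k z i = ∑ j ∈ Ioc 0 (k:ℤ), z (i+j) := by
    intro z i
    unfold Wd
    rw [Icc_one_eq_Ioc]
  -- Claim A : interior windows agree
  have hA : ∀ i : ℤ, 1 ≤ i → i + k ≤ (m:ℤ) → Wd k y i = Wd k x i := by
    intro i h1 h2
    unfold Wd
    apply Finset.sum_congr rfl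
    intro j hj
    simp only [Finset.mem_Icc] at hj
    exact hev1 (i+j) (by omega) (by omega)
  -- Claim B : seam windows dominate
  have hB : ∀ i : ℤ, 1 ≤ i → i ≤ (m:ℤ) → (m:ℤ) < i + k →
      Wd k x i ≤ Wd k y i ∧ W0 ≤ Wd k y i := by
    intro i h1 h2 h3
    have hsy := sum_Ioc_consec (fun j => y (i+j)) (by omega : (0:ℤ) ≤ (m:ℤ)-i)
      (by omega : (m:ℤ)-i ≤ (k:ℤ))
    have hsx := sum_Ioc_consec (fun j => x (i+j)) (by omega : (0:ℤ) ≤ (m:ℤ)-i)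
      (by omega : (m:ℤ)-i ≤ (k:ℤ))
    have heq1 : ∀ j ∈ Ioc (0:ℤ) ((m:ℤ)-i), y (i+j) = x (i+j) := by
      intro j hj
      simp only [Finset.mem_Ioc] at hj
      exact hev1 (i+j) (by omega) (by omega)
    have h21 : W0 ≤ ∑ j ∈ Ioc ((m:ℤ)-i) (k:ℤ), y (i+j) := by
      have mem : (m:ℤ)-i+1 ∈ Ioc ((m:ℤ)-i) (k:ℤ) := by simp [Finset.mem_Ioc]; omega
      have := Finset.single_le_sum (f := fun j => y (i+j)) (fun j _ => hynn _) mem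
      have hge := hfill_ge (i + ((m:ℤ)-i+1)) (by omega) (by omega)
      linarith
    have h2x : ∑ j ∈ Ioc ((m:ℤ)-i) (k:ℤ), x (i+j) ≤ W0 := by
      have hs := sum_shift (fun j => x (i+j)) 0 ((k:ℤ)-((m:ℤ)-i)) ((m:ℤ)-i)
      rw [zero_add, sub_add_cancel] at hs
      rw [← hs]
      have e1 : ∀ j ∈ Ioc (0:ℤ) ((k:ℤ)-((m:ℤ)-i)), x (i + (j + ((m:ℤ)-i))) = x ((m:ℤ)+j) := by
        intro j _
        congr 1; ring
      rw [Finset.sum_congr rfl e1]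
      have sub : Ioc (0:ℤ) ((k:ℤ)-((m:ℤ)-i)) ⊆ Ioc (0:ℤ) (k:ℤ) :=
        Finset.Ioc_subset_Ioc le_rfl (by omega)
      have hle := Finset.sum_le_sum_of_subset_of_nonneg
        (f := fun j => x ((m:ℤ)+j)) sub (fun j _ _ => hx0 _)
      have hWm : ∑ j ∈ Ioc (0:ℤ) (k:ℤ), x ((m:ℤ)+j) = W0 := by
        have := Wd_per m k x hxper 0
        rw [zero_add] at this
        rw [← hWdIoc x (m:ℤ), this, hW0def]
      linarith
    have hch1 : ∑ j ∈ Ioc (0:ℤ) ((m:ℤ)-i), y (i+j) = ∑ j ∈ Ioc (0:ℤ) ((m:ℤ)-i), x (i+j) :=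
      Finset.sum_congr rfl heq1
    have hch1nn : 0 ≤ ∑ j ∈ Ioc (0:ℤ) ((m:ℤ)-i), x (i+j) :=
      Finset.sum_nonneg fun j _ => hx0 _
    constructor
    · rw [hWdIoc y i, hWdIoc x i, ← hsy, ← hsx, hch1]
      linarith
    · rw [hWdIoc y i, ← hsy, hch1]
      linarith
  -- Claim D : window after the last filler
  have hD : W0 ≤ Wd k y NZ := by
    by_cases hkm : (k:ℤ) ≤ (m:ℤ)
    · have : Wd k y NZ = W0 := by
        rw [hWdIoc y NZ]
        have e1 : ∀ j ∈ Ioc (0:ℤ) (k:ℤ), y (NZ+j) = x (0+j) := by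
          intro j hj
          simp only [Finset.mem_Ioc] at hj
          rw [hev3 (NZ+j) (by omega) (by omega)]
          congr 1; omega
        rw [Finset.sum_congr rfl e1, ← hWdIoc x 0, hW0def]
      linarith
    · have mem : (m:ℤ)+1 ∈ Icc (1:ℤ) (k:ℤ) := by simp [Finset.mem_Icc]; omega
      have hs : y (NZ + ((m:ℤ)+1)) ≤ ∑ j ∈ Icc (1:ℤ) (k:ℤ), y (NZ + j) :=
        Finset.single_le_sum (f := fun j => y (NZ+j)) (fun j _ => hynn _) mem
      have hvv : y (NZ + ((m:ℤ)+1)) = (2:ℝ)^((r:ℤ)-1) * W0 := by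
        rw [show NZ + ((m:ℤ)+1) = NZ + (m:ℤ) + 1 by ring, hev4]
      rw [hvv] at hs
      have := hpow_ge ((r:ℤ)-1) (by omega)
      unfold Wd
      linarith
  -- positivity of all windows of y
  have hWyper : ∀ i, Wd k y (i + NZ) = Wd k y i := by
    intro i
    have := Wd_per (m+r) k y (fun t => by rw [hcast]; exact hyper t) i
    rw [hcast] at this
    exact this
  have hWypos : ∀ i, 0 < Wd k y i := by
    intro i
    obtain ⟨s, hs1, hs2, hs3⟩ := per_reduce (fun t => Wd k y t) NZ (by omega) hWyper i
    rw [hs3]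
    by_cases hsm : s ≤ (m:ℤ)
    · by_cases hsk : s + k ≤ (m:ℤ)
      · rw [hA s hs1 hsk]; exact hxpos s
      · have := (hB s hs1 hsm (by omega)).2
        linarith
    · by_cases hsN : s = NZ
      · rw [hsN]; linarith
      · have mem : (1:ℤ) ∈ Icc (1:ℤ) (k:ℤ) := by simp [Finset.mem_Icc]; omega
        have hs := Finset.single_le_sum (f := fun j => y (s+j)) (fun j _ => hynn _) mem
        have hge := hfill_ge (s+1) (by omega) (by omega)
        unfold Wd
        linarith
  -- filler terms are at most 2k
  have hterm_fill : ∀ i : ℤ, (m:ℤ) < i → i ≤ NZ → (k:ℝ) * y i / Wd k y i ≤ 2*(k:ℝ) := by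
    intro i h1 h2
    have hknn : (0:ℝ) ≤ (k:ℝ) := by positivity
    have hW := hWypos i
    rw [div_le_iff₀ hW]
    by_cases hiN : i = NZ
    · subst hiN
      have hyN : y NZ = W0 := by
        rw [hev2 NZ (by omega) le_rfl, sub_self, zpow_zero, one_mul]
      rw [hyN]
      nlinarith [hD]
    · have h1' : y (i+1) ≤ Wd k y i := by
        have mem : (1:ℤ) ∈ Icc (1:ℤ) (k:ℤ) := by simp [Finset.mem_Icc]; omega
        have := Finset.single_le_sum (f := fun j => y (i+j)) (fun j _ => hynn _) mem
        unfold Wd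
        exact this
      have h2' : y i = 2 * y (i+1) := by
        rw [hev2 i (by omega) (by omega), hev2 (i+1) (by omega) (by omega),
          show NZ - i = (NZ-(i+1))+1 by ring, zpow_add_one₀ (two_ne_zero)]
        ring
      nlinarith [hynn (i+1)]
  -- y is feasible for (m+r, k)
  have hyfeas : Feas (m+r) k y := by
    refine ⟨hynn, fun i => ?_, hWypos⟩
    rw [hcast]
    exact hyper i
  have hAle := Ank_le_Snk (m+r) k y hyfeas
  -- split the sum
  have hsplit := sum_Ioc_consec (fun i => (k:ℝ) * y i / Wd k y i)
    (by omega : (0:ℤ) ≤ (m:ℤ)) (by omega : (m:ℤ) ≤ NZ)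
  have hch1le : ∑ i ∈ Ioc (0:ℤ) (m:ℤ), (k:ℝ) * y i / Wd k y i ≤ Snk m k x := by
    rw [Snk_eq]
    apply Finset.sum_le_sum
    intro i hi
    simp only [Finset.mem_Ioc] at hi
    rw [hev1 i (by omega) (by omega)]
    show (k:ℝ) * x i / Wd k y i ≤ (k:ℝ) * x i / Wd k x i
    by_cases hik : i + k ≤ (m:ℤ)
    · rw [hA i (by omega) hik]
    · have hb := (hB i (by omega) (by omega) (by omega)).1
      apply div_le_div_of_nonneg_left ?_ (hxpos i) hb
      have := hx0 i
      positivity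
  have hch2le : ∑ i ∈ Ioc ((m:ℤ)) NZ, (k:ℝ) * y i / Wd k y i ≤ 2*(k:ℝ)*(r:ℝ) := by
    have hb : ∀ i ∈ Ioc ((m:ℤ)) NZ, (k:ℝ) * y i / Wd k y i ≤ 2*(k:ℝ) := by
      intro i hi
      simp only [Finset.mem_Ioc] at hi
      exact hterm_fill i hi.1 hi.2
    have := Finset.sum_le_card_nsmul _ _ _ hb
    have hcard : (Ioc ((m:ℤ)) NZ).card = r := by
      rw [Int.card_Ioc]
      omega
    rw [hcard] at this
    calc ∑ i ∈ Ioc ((m:ℤ)) NZ, (k:ℝ) * y i / Wd k y i ≤ r • (2*(k:ℝ)) := this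
      _ = 2*(k:ℝ)*(r:ℝ) := by rw [nsmul_eq_mul]; ring
  calc Ank (m+r) k ≤ Snk (m+r) k y := hAle
    _ = ∑ i ∈ Ioc (0:ℤ) (m:ℤ), (k:ℝ) * y i / Wd k y i
        + ∑ i ∈ Ioc ((m:ℤ)) NZ, (k:ℝ) * y i / Wd k y i := by
          rw [Snk_eq, hcast, ← hsplit]
    _ ≤ Snk m k x + 2*(k:ℝ)*(r:ℝ) := by linarith

lemma Ank_ext (m k r : ℕ) (hm : 1 ≤ m) (hk : 1 ≤ k) (hr : k ≤ r) :
    Ank (m+r) k ≤ Ank m k + 2*(k:ℝ)*(r:ℝ) := by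
  apply le_Ank_add m k hk
  intro x hx
  obtain ⟨x', hf, hS, hmax⟩ := exists_shift m k hm x hx
  have := Snk_ext_core m k r hm hk hr x' hf hmax
  rw [hS] at this
  exact this

lemma nat_decomp (n n0 K : ℕ) (h0 : 1 ≤ n0) (hK : 1 ≤ K) (h : n0 + K ≤ n) :
    ∃ q r, 1 ≤ q ∧ K ≤ r ∧ r < n0 + K ∧ n = q*n0 + r := by
  have h0' : 0 < n0 := h0
  have hdm := Nat.div_add_mod (n - K) n0
  have hmod := Nat.mod_lt (n - K) h0'
  have hq1 : 1 ≤ (n-K)/n0 := (Nat.one_le_div_iff h0').mpr (by omega)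
  have hcomm : (n-K)/n0 * n0 = n0 * ((n-K)/n0) := mul_comm _ _
  exact ⟨(n-K)/n0, n - (n-K)/n0*n0, hq1, by omega, by omega, by omega⟩

/-- `lim_{n→∞} A_n/n = B_∞`, where `B_∞ = lim_{k→∞} B_k`. -/
theorem lim_An_div_n_eq_Binfty (Binf : ℝ)
    (hB : Tendsto (fun k : ℕ => Bk k) atTop (𝓝 Binf)) :
    Tendsto (fun n : ℕ => An n / n) atTop (𝓝 Binf) := by
  rw [Metric.tendsto_atTop]
  intro ε hε
  have h3 : (0:ℝ) < ε/3 := by linarith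
  obtain ⟨K0, hK0⟩ := (Metric.tendsto_atTop.mp hB) (ε/3) h3
  obtain ⟨K, hK1, hKd⟩ : ∃ K, 1 ≤ K ∧ dist (Bk K) Binf < ε/3 :=
    ⟨max K0 1, le_max_right _ _, hK0 _ (le_max_left _ _)⟩
  rw [Real.dist_eq, abs_sub_lt_iff] at hKd
  have hBK : Bk K < Binf + ε/3 := by linarith [hKd.1]
  obtain ⟨n0, hn0, hn0lt⟩ := exists_Ank_near K (Bk K + ε/3) (by linarith)
  obtain ⟨N1, hN1⟩ : ∃ N1 : ℕ, (6*(K:ℝ)*((n0:ℝ)+(K:ℝ))) / ε < N1 := exists_nat_gt _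
  refine ⟨max (n0+K) N1, fun n hn => ?_⟩
  have hnn0K : n0 + K ≤ n := le_trans (le_max_left _ _) hn
  have hnN1 : N1 ≤ n := le_trans (le_max_right _ _) hn
  have hn1 : 1 ≤ n := by omega
  have hnR : (0:ℝ) < n := by exact_mod_cast hn1
  have hn0R : (0:ℝ) < n0 := by exact_mod_cast hn0
  have hKnn : (0:ℝ) ≤ K := by positivity
  have hlow : Binf ≤ An n / n := Binf_le_div Binf hB n hn1
  -- upper bound
  obtain ⟨q, r, hq1, hrK, hrup, hn_eq⟩ := nat_decomp n n0 K hn0 hK1 hnn0K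
  have hA1 : Ank n K ≤ Ank (q*n0) K + 2*(K:ℝ)*(r:ℝ) := by
    have := Ank_ext (q*n0) K r (Nat.mul_pos hq1 hn0) hK1 hrK
    rwa [← hn_eq] at this
  have hA2 : Ank (q*n0) K ≤ (q:ℝ) * Ank n0 K := Ank_rep n0 K q hn0 hK1 hq1
  have hup1 : An n ≤ Ank n K := An_le n K hK1
  have hAnk0nn : 0 ≤ Ank n0 K := Ank_nonneg n0 K
  have hqn : (q:ℝ) * (n0:ℝ) ≤ (n:ℝ) := by
    have h' : q * n0 ≤ n := by omega
    exact_mod_cast h'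
  have e1 : (q:ℝ) * Ank n0 K / n ≤ Ank n0 K / n0 := by
    rw [div_le_div_iff₀ hnR hn0R]
    nlinarith [mul_le_mul_of_nonneg_left hqn hAnk0nn]
  have e2 : 2*(K:ℝ)*(r:ℝ)/n ≤ ε/3 := by
    have hrle : (r:ℝ) ≤ (n0:ℝ)+(K:ℝ) := by exact_mod_cast le_of_lt hrup
    have h6 : 6*(K:ℝ)*((n0:ℝ)+(K:ℝ)) < ε * n := by
      rw [div_lt_iff₀ hε] at hN1
      have hNn : (N1:ℝ) ≤ n := by exact_mod_cast hnN1
      nlinarith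
    rw [div_le_iff₀ hnR]
    nlinarith [mul_le_mul_of_nonneg_left hrle (by positivity : (0:ℝ) ≤ 2*(K:ℝ))]
  have hmain : An n / n < Binf + ε := by
    have hnum : An n ≤ (q:ℝ) * Ank n0 K + 2*(K:ℝ)*(r:ℝ) := by linarith
    have s1 : An n / n ≤ ((q:ℝ) * Ank n0 K + 2*(K:ℝ)*(r:ℝ))/n :=
      (div_le_div_iff_of_pos_right hnR).mpr hnum
    have s3 : ((q:ℝ) * Ank n0 K + 2*(K:ℝ)*(r:ℝ))/n
        = (q:ℝ) * Ank n0 K / n + 2*(K:ℝ)*(r:ℝ)/n := add_div _ _ _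
    have s4 : Ank n0 K / n0 < Bk K + ε/3 := hn0lt
    linarith
  rw [Real.dist_eq, abs_sub_lt_iff]
  constructor
  · linarith
  · linarith
end

section
/- For every n ≥ 1, Φ_n = T̃_n*(1/n); that is, the infimum of the cyclic sum S_n^max equals the infimum of Σ_{i=1−n}^{−1} x_i/x_{i+1} + n·x_0 over nonnegative n-tuples (x_{1−n},…,x_0) summing to 1. -/
open Finset
open scoped ENNReal

/-- Interval average `a_{[a:b]}(x) = (x_a + … + x_b)/(b-a+1)`. -/
noncomputable def iavg (x : ℤ → ℝ) (a b : ℤ) : ℝ :=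
  (∑ j ∈ Finset.Icc a b, x j) / ((b - a + 1 : ℤ) : ℝ)

/-- Maximal forward average `m_i^+(x) = sup_{r ≥ 1} a_{[i+1 : i+r]}(x)`. -/
noncomputable def mplus (x : ℤ → ℝ) (i : ℤ) : ℝ :=
  sSup {a : ℝ | ∃ r : ℕ, 1 ≤ r ∧ a = iavg x (i + 1) (i + (r : ℤ))}

/-- The cyclic sum `S_n^max(x) = Σ_{i=1}^n x_i / m_i^+(x)`, valued in `ℝ≥0∞`
(a term with `x_i = 0` is `0`; it is `∞` if `x_i > 0` and `m_i^+(x) = 0`). -/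
noncomputable def SmaxE (n : ℕ) (x : ℤ → ℝ) : ℝ≥0∞ :=
  ∑ i ∈ Finset.Icc (1 : ℤ) (n : ℤ), ENNReal.ofReal (x i) / ENNReal.ofReal (mplus x i)

/-- `Φ_n`: infimum of `S_n^max(x)` over nonnegative `n`-periodic `x ≠ 0`. -/
noncomputable def PhiE (n : ℕ) : ℝ≥0∞ :=
  sInf {t : ℝ≥0∞ | ∃ x : ℤ → ℝ, (∀ i, 0 ≤ x i) ∧ (∀ i, x (i + (n : ℤ)) = x i) ∧
    (∃ i, x i ≠ 0) ∧ t = SmaxE n x}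

/-- `Δ_N`: sequences `(x_i)_{i ≤ 0}` of nonnegative reals with `x_i = 0` for
`i ≤ -N` and `x_{1−N} + … + x_0 = 1` (encoded as functions on `ℤ` vanishing
at positive indices). -/
def Delta (N : ℕ) : Set (ℤ → ℝ) :=
  {x | (∀ i, 0 ≤ x i) ∧ (∀ i : ℤ, i ≤ -(N : ℤ) → x i = 0) ∧
    (∀ i : ℤ, 0 < i → x i = 0) ∧ ∑ i ∈ Finset.Icc (1 - (N : ℤ)) 0, x i = 1}

/-- `T̃_N(x,p) = Σ_{i=1−N}^{−1} x_i/x_{i+1} + x_0/p`, with the convention that a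
term with `x_i = 0` is `0` and the value is `+∞` if `x_i > 0` and `x_{i+1} = 0`. -/
noncomputable def Ttil (N : ℕ) (x : ℤ → ℝ) (p : ℝ) : ℝ≥0∞ :=
  (∑ i ∈ Finset.Icc (1 - (N : ℤ)) (-1), ENNReal.ofReal (x i) / ENNReal.ofReal (x (i + 1))) +
    ENNReal.ofReal (x 0) / ENNReal.ofReal p

/-- `T̃_N*(p) = inf_{x ∈ Δ_N} T̃_N(x,p)`. -/
noncomputable def TtilStar (N : ℕ) (p : ℝ) : ℝ≥0∞ :=
  sInf {t : ℝ≥0∞ | ∃ x ∈ Delta N, t = Ttil N x p}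


namespace PhiAux

/-- maximal prefix average of a list -/
noncomputable def maxAvg (L : List ℝ) : ℝ :=
  if h : L = [] then 0
  else (Finset.Icc 1 L.length).sup'
    (Finset.nonempty_Icc.mpr (List.length_pos_iff.mpr h)) (fun k => (L.take k).sum / k)

lemma take_avg_le_maxAvg {L : List ℝ} {k : ℕ} (h1 : 1 ≤ k) (h2 : k ≤ L.length) :
    (L.take k).sum / k ≤ maxAvg L := by
  have hL : L ≠ [] := by
    intro e; subst e; simp at h2; omega
  rw [maxAvg, dif_neg hL]
  exact Finset.le_sup' (fun k => (L.take k).sum / k) (Finset.mem_Icc.mpr ⟨h1, h2⟩)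

lemma maxAvg_le {L : List ℝ} {b : ℝ} (hL : L ≠ [])
    (h : ∀ k, 1 ≤ k → k ≤ L.length → (L.take k).sum / k ≤ b) : maxAvg L ≤ b := by
  rw [maxAvg, dif_neg hL]
  exact Finset.sup'_le _ _ fun k hk =>
    h k (Finset.mem_Icc.mp hk).1 (Finset.mem_Icc.mp hk).2

lemma maxAvg_singleton (a : ℝ) : maxAvg [a] = a := by
  apply le_antisymm
  · apply maxAvg_le (by simp)
    intro k h1 h2
    simp only [List.length_singleton] at h2
    have : k = 1 := by omega
    subst this
    simp
  · have := take_avg_le_maxAvg (L := [a]) (k := 1) le_rfl (by simp)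
    simpa using this

lemma le_maxAvg_head (a : ℝ) (L : List ℝ) : a ≤ maxAvg (a :: L) := by
  have := take_avg_le_maxAvg (L := a :: L) (k := 1) le_rfl (by simp)
  simpa using this

lemma maxAvg_cons_le_max {a : ℝ} {L : List ℝ} (hL : L ≠ []) :
    maxAvg (a :: L) ≤ max a (maxAvg L) := by
  apply maxAvg_le (by simp)
  intro k h1 h2
  match k, h1 with
  | 1, _ => simpa using le_max_left a (maxAvg L)
  | (j+2), _ =>
    have hj1 : 1 ≤ j + 1 := by omega
    have hj2 : j + 1 ≤ L.length := by
      simpa using h2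
    have hS : (L.take (j+1)).sum / ((j:ℝ)+1) ≤ maxAvg L := by
      have := take_avg_le_maxAvg hj1 hj2
      push_cast at this
      exact this
    have hSle : (L.take (j+1)).sum ≤ (j+1 : ℝ) * maxAvg L := by
      have hpos : (0:ℝ) < (j:ℝ)+1 := by positivity
      rw [div_le_iff₀ hpos] at hS
      linarith
    have hsum : ((a :: L).take (j+2)).sum = a + (L.take (j+1)).sum := by
      simp
    rw [hsum]
    have hpos : (0:ℝ) < ((j+2 : ℕ) : ℝ) := by positivity
    rw [div_le_iff₀ hpos]
    have h1' : a ≤ max a (maxAvg L) := le_max_left _ _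
    have h2' : maxAvg L ≤ max a (maxAvg L) := le_max_right _ _
    have h3 : (j+1 : ℝ) * maxAvg L ≤ (j+1 : ℝ) * max a (maxAvg L) := by
      apply mul_le_mul_of_nonneg_left h2' (by positivity)
    push_cast
    nlinarith [hSle]

/-- chain cost -/
noncomputable def chainCost (p : ℝ) : List ℝ → ℝ≥0∞
  | [] => 0
  | [a] => ENNReal.ofReal a / ENNReal.ofReal p
  | a :: b :: T => ENNReal.ofReal a / ENNReal.ofReal b + chainCost p (b :: T)

/-- max-average cost -/
noncomputable def Gcost (p : ℝ) : List ℝ → ℝ≥0∞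
  | [] => 0
  | [a] => ENNReal.ofReal a / ENNReal.ofReal p
  | a :: b :: T => ENNReal.ofReal a / ENNReal.ofReal (maxAvg (b :: T)) + Gcost p (b :: T)

/-- The key combinatorial lemma. -/
lemma omega_lemma (p : ℝ) : ∀ (L : List ℝ), L ≠ [] → (∀ a ∈ L, 0 ≤ a) → ∀ t : ℝ, 0 ≤ t →
    ∃ (h : ℝ) (T : List ℝ), 0 ≤ h ∧ t ≤ h ∧ (∀ a ∈ T, 0 ≤ a) ∧
      h + T.sum = t + L.sum ∧ T.length ≤ L.length ∧ (h = t ∨ T.length + 1 ≤ L.length) ∧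
      chainCost p (h :: T) ≤ ENNReal.ofReal t / ENNReal.ofReal (maxAvg L) + Gcost p L := by
  intro L
  induction L with
  | nil => intro h; exact absurd rfl h
  | cons x L' IH =>
    intro _ hnn t ht
    have hx0 : 0 ≤ x := hnn x (by simp)
    match L', IH with
    | [], _ =>
      refine ⟨t, [x], ht, le_rfl, by simpa using hx0, by simp [add_comm], le_rfl, Or.inl rfl, ?_⟩
      rw [maxAvg_singleton]
      rfl
    | (y :: T0), IH =>
      set L' := y :: T0 with hL'
      have hL'ne : L' ≠ [] := by simp [hL']
      have hnn' : ∀ a ∈ L', 0 ≤ a := fun a ha => hnn a (by simp [ha])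
      set σ := maxAvg (x :: L') with hσ
      set μ := maxAvg L' with hμ
      by_cases hcase : σ ≤ x
      · -- head is the max; prepend
        obtain ⟨h', T', hh'0, hxh', hT'nn, hsum', hlen', _, hchain'⟩ :=
          IH hL'ne hnn' x hx0
        refine ⟨t, h' :: T', ht, le_rfl, ?_, ?_, ?_, Or.inl rfl, ?_⟩
        · intro a ha
          rcases List.mem_cons.mp ha with h | h
          · exact h ▸ hh'0
          · exact hT'nn a h
        · simp only [List.sum_cons]
          linarith [hsum']
        · simpa using Nat.succ_le_succ hlen'
        · have e1 : chainCost p (t :: h' :: T') =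
              ENNReal.ofReal t / ENNReal.ofReal h' + chainCost p (h' :: T') := rfl
          have e2 : Gcost p (x :: L') =
              ENNReal.ofReal x / ENNReal.ofReal μ + Gcost p L' := rfl
          rw [e1, e2]
          have hb1 : ENNReal.ofReal t / ENNReal.ofReal h' ≤
              ENNReal.ofReal t / ENNReal.ofReal σ := by
            apply ENNReal.div_le_div_left
            exact ENNReal.ofReal_le_ofReal (le_trans hcase hxh')
          calc ENNReal.ofReal t / ENNReal.ofReal h' + chainCost p (h' :: T')
              ≤ ENNReal.ofReal t / ENNReal.ofReal σ +
                (ENNReal.ofReal x / ENNReal.ofReal μ + Gcost p L') :=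
                add_le_add hb1 hchain'
            _ = _ := rfl
      · -- x < σ : merge x into the floating mass
        push_neg at hcase
        have hσμ : σ ≤ μ := by
          have := maxAvg_cons_le_max (a := x) hL'ne
          rcases le_max_iff.mp this with h | h
          · exact absurd h (not_le.mpr hcase)
          · exact h
        obtain ⟨h'', T'', hh''0, hth'', hT''nn, hsum'', hlen'', _, hchain''⟩ :=
          IH hL'ne hnn' (t + x) (by linarith)
        refine ⟨h'', T'', hh''0, le_trans (by linarith) hth'', hT''nn, ?_, ?_, ?_, ?_⟩
        · rw [hsum'']
          simp only [List.sum_cons]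
          ring
        · exact le_trans hlen'' (by simp)
        · right
          simp only [List.length_cons]
          omega
        · refine le_trans hchain'' ?_
          have e2 : Gcost p (x :: L') =
              ENNReal.ofReal x / ENNReal.ofReal μ + Gcost p L' := rfl
          rw [e2]
          have key : ENNReal.ofReal (t + x) / ENNReal.ofReal μ ≤
              ENNReal.ofReal t / ENNReal.ofReal σ + ENNReal.ofReal x / ENNReal.ofReal μ := by
            rw [ENNReal.ofReal_add ht hx0, ENNReal.add_div]
            refine add_le_add ?_ le_rfl
            apply ENNReal.div_le_div_left
            exact ENNReal.ofReal_le_ofReal hσμ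
          calc ENNReal.ofReal (t + x) / ENNReal.ofReal μ + Gcost p L'
              ≤ (ENNReal.ofReal t / ENNReal.ofReal σ +
                 ENNReal.ofReal x / ENNReal.ofReal μ) + Gcost p L' :=
                add_le_add key le_rfl
            _ = _ := by rw [add_assoc]






lemma sum_Icc_int_eq_range {M : Type*} [AddCommMonoid M] (f : ℤ → M) (a : ℤ) (r : ℕ) :
    (∑ i ∈ Finset.Icc (a + 1) (a + (r : ℤ)), f i) = ∑ k ∈ Finset.range r, f (a + 1 + (k : ℤ)) := by
  induction r with
  | zero => simp
  | succ r ih =>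
    have hc : (((r : ℕ) + 1 : ℕ) : ℤ) = (r : ℤ) + 1 := by push_cast; ring
    rw [hc]
    have hins : Finset.Icc (a + 1) (a + ((r : ℤ) + 1)) =
        insert (a + (r : ℤ) + 1) (Finset.Icc (a + 1) (a + (r : ℤ))) := by
      ext i
      simp only [Finset.mem_Icc, Finset.mem_insert]
      omega
    rw [hins, Finset.sum_insert (by simp only [Finset.mem_Icc]; omega), ih,
      Finset.sum_range_succ, show a + (r:ℤ) + 1 = a + 1 + (r:ℤ) by ring]
    exact add_comm _ _

/-- window sum: `x_{i+1} + ... + x_{i+r}` -/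
noncomputable def W (x : ℤ → ℝ) (i : ℤ) (r : ℕ) : ℝ := ∑ k ∈ Finset.range r, x (i + 1 + (k:ℤ))

lemma W_succ (x : ℤ → ℝ) (i : ℤ) (r : ℕ) : W x i (r+1) = W x i r + x (i + 1 + (r:ℤ)) :=
  Finset.sum_range_succ _ r

lemma W_one (x : ℤ → ℝ) (i : ℤ) : W x i 1 = x (i+1) := by simp [W]

lemma W_add (x : ℤ → ℝ) (i : ℤ) (a b : ℕ) : W x i (a + b) = W x i a + W x (i + (a:ℤ)) b := by
  induction b with
  | zero => simp [W]
  | succ b ih =>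
    have h1 : a + (b + 1) = (a + b) + 1 := rfl
    rw [h1, W_succ, ih, W_succ]
    have : i + 1 + ((a:ℤ) + (b:ℤ)) = i + (a:ℤ) + 1 + (b:ℤ) := by ring
    push_cast
    rw [show i + 1 + ((a:ℤ) + (b:ℤ)) = i + (a:ℤ) + 1 + (b:ℤ) by ring]
    ring

lemma W_nonneg {x : ℤ → ℝ} (hx : ∀ i, 0 ≤ x i) (i : ℤ) (r : ℕ) : 0 ≤ W x i r :=
  Finset.sum_nonneg fun _ _ => hx _

section Periodic

variable {n : ℕ} {x : ℤ → ℝ} (hper : ∀ i, x (i + (n : ℤ)) = x i)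

include hper in
lemma W_periodic (i : ℤ) (r : ℕ) : W x (i + (n:ℤ)) r = W x i r := by
  unfold W
  apply Finset.sum_congr rfl
  intro k _
  rw [show i + (n:ℤ) + 1 + (k:ℤ) = (i + 1 + (k:ℤ)) + (n:ℤ) by ring, hper]

include hper in
lemma rot_step_real (b : ℤ) :
    (∑ k ∈ Finset.range n, x ((b + 1) + (k:ℤ))) = ∑ k ∈ Finset.range n, x (b + (k:ℤ)) := by
  have h1 : (∑ k ∈ Finset.range (n+1), x (b + (k:ℤ))) =
      (∑ k ∈ Finset.range n, x (b + ((k:ℤ) + 1))) + x (b + 0) := by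
    have := Finset.sum_range_succ' (fun k => x (b + (k:ℤ))) n
    push_cast at this
    convert this using 2
  have h2 : (∑ k ∈ Finset.range (n+1), x (b + (k:ℤ))) =
      (∑ k ∈ Finset.range n, x (b + (k:ℤ))) + x (b + (n:ℤ)) :=
    Finset.sum_range_succ _ n
  have h3 : x (b + (n:ℤ)) = x (b + 0) := by rw [add_zero, hper b]
  have h4 : (∑ k ∈ Finset.range n, x ((b+1) + (k:ℤ))) =
      ∑ k ∈ Finset.range n, x (b + ((k:ℤ) + 1)) := by
    apply Finset.sum_congr rfl; intro k _; congr 1; ring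
  rw [h4]
  rw [h3] at h2
  linarith [h1, h2]

include hper in
lemma rot_real (a : ℤ) :
    (∑ k ∈ Finset.range n, x (a + (k:ℤ))) = ∑ k ∈ Finset.range n, x ((k:ℤ)) := by
  induction a using Int.induction_on with
  | zero => simp
  | succ a ih => rw [show ((a:ℤ) + 1) = (a:ℤ) + 1 from rfl, rot_step_real hper a, ih]
  | pred a ih =>
    have := rot_step_real hper (-(a:ℤ) - 1)
    rw [show -(a:ℤ) - 1 + 1 = -(a:ℤ) by ring] at this
    exact this.symm.trans ih

include hper in
lemma W_full (i : ℤ) : W x i n = W x 0 n := by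
  unfold W
  rw [rot_real hper (i+1)]
  have := rot_real hper (0+1)
  rw [this]

end Periodic

section RotENN

variable {n : ℕ} {g : ℤ → ℝ≥0∞} (hper : ∀ i, g (i + (n : ℤ)) = g i) (hfin : ∀ i, g i ≠ ⊤)

include hper hfin in
lemma rot_step_enn (b : ℤ) :
    (∑ k ∈ Finset.range n, g ((b + 1) + (k:ℤ))) = ∑ k ∈ Finset.range n, g (b + (k:ℤ)) := by
  have h1 : (∑ k ∈ Finset.range (n+1), g (b + (k:ℤ))) =
      (∑ k ∈ Finset.range n, g (b + ((k:ℤ) + 1))) + g (b + 0) := by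
    have := Finset.sum_range_succ' (fun k => g (b + (k:ℤ))) n
    push_cast at this
    convert this using 2
  have h2 : (∑ k ∈ Finset.range (n+1), g (b + (k:ℤ))) =
      (∑ k ∈ Finset.range n, g (b + (k:ℤ))) + g (b + (n:ℤ)) :=
    Finset.sum_range_succ _ n
  have h3 : g (b + (n:ℤ)) = g (b + 0) := by rw [add_zero, hper b]
  have h4 : (∑ k ∈ Finset.range n, g ((b+1) + (k:ℤ))) =
      ∑ k ∈ Finset.range n, g (b + ((k:ℤ) + 1)) := by
    apply Finset.sum_congr rfl; intro k _; congr 1; ring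
  rw [h3] at h2
  rw [h2] at h1
  rw [h4]
  exact WithTop.add_right_cancel (hfin (b+0)) h1.symm

include hper hfin in
lemma rot_enn (a : ℤ) :
    (∑ k ∈ Finset.range n, g (a + (k:ℤ))) = ∑ k ∈ Finset.range n, g ((k:ℤ)) := by
  induction a using Int.induction_on with
  | zero => simp
  | succ a ih => rw [rot_step_enn hper hfin a, ih]
  | pred a ih =>
    have := rot_step_enn hper hfin (-(a:ℤ) - 1)
    rw [show -(a:ℤ) - 1 + 1 = -(a:ℤ) by ring] at this
    exact this.symm.trans ih

end RotENN






/-! ### window lists -/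

noncomputable def win (x : ℤ → ℝ) : ℤ → ℕ → List ℝ
  | _, 0 => []
  | a, (m+1) => x (a+1) :: win x (a+1) m

lemma win_length (x : ℤ → ℝ) : ∀ (m : ℕ) (a : ℤ), (win x a m).length = m := by
  intro m
  induction m with
  | zero => intro a; rfl
  | succ m ih => intro a; simp [win, ih]

lemma win_ne_nil (x : ℤ → ℝ) {m : ℕ} (hm : 1 ≤ m) (a : ℤ) : win x a m ≠ [] := by
  apply List.ne_nil_of_length_pos
  rw [win_length]
  omega

lemma win_take (x : ℤ → ℝ) : ∀ (j m : ℕ) (a : ℤ), j ≤ m → (win x a m).take j = win x a j := by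
  intro j
  induction j with
  | zero => intro m a _; simp [win]
  | succ j ih =>
    intro m a hj
    match m with
    | (m'+1) =>
      simp only [win, List.take_succ_cons]
      rw [ih m' (a+1) (by omega)]

lemma win_sum (x : ℤ → ℝ) : ∀ (m : ℕ) (a : ℤ), (win x a m).sum = W x a m := by
  intro m
  induction m with
  | zero => intro a; simp [win, W]
  | succ m ih =>
    intro a
    simp only [win, List.sum_cons, ih]
    have h1 : W x a (m + 1) = W x a (1 + m) := by rw [Nat.add_comm]
    have h2 : W x a (1 + m) = W x a 1 + W x (a + ((1:ℕ):ℤ)) m := W_add x a 1 m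
    rw [h1, h2, W_one]
    norm_num

lemma win_mem_nonneg {x : ℤ → ℝ} (hx : ∀ i, 0 ≤ x i) :
    ∀ (m : ℕ) (a : ℤ), ∀ b ∈ win x a m, 0 ≤ b := by
  intro m
  induction m with
  | zero => intro a b hb; simp [win] at hb
  | succ m ih =>
    intro a b hb
    rcases List.mem_cons.mp hb with h | h
    · exact h ▸ hx _
    · exact ih (a+1) b h

lemma avg_le_maxAvg_win (x : ℤ → ℝ) {j m : ℕ} (a : ℤ) (h1 : 1 ≤ j) (h2 : j ≤ m) :
    W x a j / j ≤ maxAvg (win x a m) := by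
  have := take_avg_le_maxAvg (L := win x a m) (k := j) h1 (by rw [win_length]; exact h2)
  rwa [win_take x j m a h2, win_sum] at this

lemma maxAvg_win_le (x : ℤ → ℝ) {m : ℕ} {b : ℝ} (a : ℤ) (hm : 1 ≤ m)
    (hb : ∀ j, 1 ≤ j → j ≤ m → W x a j / j ≤ b) : maxAvg (win x a m) ≤ b := by
  apply maxAvg_le (win_ne_nil x hm a)
  intro k hk1 hk2
  rw [win_length] at hk2
  rw [win_take x k m a hk2, win_sum]
  exact hb k hk1 hk2

/-! ### cost unfolding lemmas -/

lemma Gcost_cons (p a : ℝ) {L : List ℝ} (hL : L ≠ []) :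
    Gcost p (a :: L) = ENNReal.ofReal a / ENNReal.ofReal (maxAvg L) + Gcost p L := by
  match L with
  | [] => exact absurd rfl hL
  | (b :: T) => rfl

lemma chainCost_cons (p a : ℝ) {L : List ℝ} (hL : L ≠ []) :
    chainCost p (a :: L) = ENNReal.ofReal a / ENNReal.ofReal L.headI + chainCost p L := by
  match L with
  | [] => exact absurd rfl hL
  | (b :: T) => rfl

lemma chainCost_zero_cons (p : ℝ) (b : ℝ) (T : List ℝ) :
    chainCost p ((0:ℝ) :: b :: T) = chainCost p (b :: T) := by
  show ENNReal.ofReal 0 / ENNReal.ofReal b + chainCost p (b :: T) = _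
  rw [ENNReal.ofReal_zero, ENNReal.zero_div, zero_add]

lemma Gcost_win (p : ℝ) (x : ℤ → ℝ) : ∀ (m : ℕ) (a : ℤ), Gcost p (win x a (m+1)) =
    (∑ k ∈ Finset.range m, ENNReal.ofReal (x (a+1+(k:ℤ))) /
        ENNReal.ofReal (maxAvg (win x (a+1+(k:ℤ)) (m-k)))) +
      ENNReal.ofReal (x (a+1+(m:ℤ))) / ENNReal.ofReal p := by
  intro m
  induction m with
  | zero =>
    intro a
    show Gcost p [x (a+1)] = _
    simp [Gcost]
  | succ m ih =>
    intro a
    have hwin : win x a (m+1+1) = x (a+1) :: win x (a+1) (m+1) := rfl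
    rw [hwin, Gcost_cons p _ (win_ne_nil x (by omega) _), ih (a+1)]
    have hrhs : (∑ k ∈ Finset.range (m+1), ENNReal.ofReal (x (a+1+(k:ℤ))) /
          ENNReal.ofReal (maxAvg (win x (a+1+(k:ℤ)) (m+1-k))))
        = (∑ k ∈ Finset.range m, ENNReal.ofReal (x (a+1+1+(k:ℤ))) /
            ENNReal.ofReal (maxAvg (win x (a+1+1+(k:ℤ)) (m-k))))
          + ENNReal.ofReal (x (a+1)) / ENNReal.ofReal (maxAvg (win x (a+1) (m+1))) := by
      rw [Finset.sum_range_succ' (fun k => ENNReal.ofReal (x (a+1+(k:ℤ))) /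
          ENNReal.ofReal (maxAvg (win x (a+1+(k:ℤ)) (m+1-k)))) m]
      congr 1
      · apply Finset.sum_congr rfl
        intro k _
        have e1 : a + 1 + ((k:ℕ)+1 : ℕ) = a + 1 + 1 + (k:ℤ) := by push_cast; ring
        have e2 : m + 1 - (k + 1) = m - k := by omega
        rw [e1, e2]
      · norm_num
    rw [hrhs]
    have e3 : x (a + 1 + 1 + (m:ℤ)) = x (a + 1 + ((m+1 : ℕ):ℤ)) := by
      congr 1; push_cast; ring
    rw [e3]
    rw [add_left_comm, ← add_assoc]

/-! ### list indexing lemmas -/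

lemma sum_getD : ∀ (M : List ℝ), M.sum = ∑ j ∈ Finset.range M.length, M.getD j 0 := by
  intro M
  induction M with
  | nil => simp
  | cons a T ih =>
    simp only [List.sum_cons, List.length_cons, ih]
    rw [Finset.sum_range_succ' (fun j => (a :: T).getD j 0) T.length]
    simp only [List.getD_cons_succ, List.getD_cons_zero]
    rw [add_comm]

lemma getD_nonneg {M : List ℝ} (h : ∀ b ∈ M, 0 ≤ b) (j : ℕ) : 0 ≤ M.getD j 0 := by
  induction M generalizing j with
  | nil => simp
  | cons a T ih =>
    cases j with
    | zero => simpa using h a (by simp)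
    | succ j =>
      simp only [List.getD_cons_succ]
      exact ih (fun b hb => h b (by simp [hb])) j

lemma chain_eq_sum (p : ℝ) : ∀ (M : List ℝ), M ≠ [] →
    chainCost p M = (∑ j ∈ Finset.range (M.length - 1),
        ENNReal.ofReal (M.getD j 0) / ENNReal.ofReal (M.getD (j+1) 0)) +
      ENNReal.ofReal (M.getD (M.length - 1) 0) / ENNReal.ofReal p := by
  intro M
  induction M with
  | nil => intro h; exact absurd rfl h
  | cons a T ihT =>
    intro _
    match T, ihT with
    | [], _ => simp [chainCost]
    | (b :: T2), ihT =>
      have e := ihT (by simp)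
      show ENNReal.ofReal a / ENNReal.ofReal b + chainCost p (b :: T2) = _
      rw [e]
      simp only [List.length_cons]
      rw [show (T2.length + 1 + 1) - 1 = T2.length + 1 from rfl,
        show (T2.length + 1) - 1 = T2.length from rfl]
      rw [Finset.sum_range_succ' (fun j => ENNReal.ofReal ((a :: b :: T2).getD j 0) /
          ENNReal.ofReal ((a :: b :: T2).getD (j+1) 0)) T2.length]
      simp only [List.getD_cons_succ, List.getD_cons_zero]
      rw [add_left_comm, add_assoc]

/-! ### ENNReal division lemmas -/

lemma ofReal_div_div {a b s : ℝ} (hb : 0 ≤ b) (hs : 0 < s) :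
    ENNReal.ofReal (a / s) / ENNReal.ofReal (b / s) = ENNReal.ofReal a / ENNReal.ofReal b := by
  rcases eq_or_lt_of_le hb with hb0 | hb0
  · rw [← hb0]
    simp only [zero_div, ENNReal.ofReal_zero]
    rcases le_or_gt a 0 with ha | ha
    · rw [ENNReal.ofReal_eq_zero.mpr ha,
        ENNReal.ofReal_eq_zero.mpr (div_nonpos_iff.mpr (Or.inr ⟨ha, hs.le⟩))]
    · have h1 : ENNReal.ofReal (a/s) ≠ 0 := by
        rw [Ne, ENNReal.ofReal_eq_zero]; push_neg; positivity
      have h2 : ENNReal.ofReal a ≠ 0 := by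
        rw [Ne, ENNReal.ofReal_eq_zero]; push_neg; exact ha
      rw [ENNReal.div_zero h1, ENNReal.div_zero h2]
  · rw [← ENNReal.ofReal_div_of_pos (div_pos hb0 hs),
      show (a/s)/(b/s) = a/b by field_simp,
      ENNReal.ofReal_div_of_pos hb0]

lemma ofReal_div_one_div {u s c : ℝ} (hs : 0 < s) (hc : (0:ℝ) < c) :
    ENNReal.ofReal (u / s) / ENNReal.ofReal (1 / c) =
      ENNReal.ofReal u / ENNReal.ofReal (s / c) := by
  rw [← ENNReal.ofReal_div_of_pos (by positivity : (0:ℝ) < 1/c),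
    show (u/s)/(1/c) = u/(s/c) by field_simp,
    ENNReal.ofReal_div_of_pos (by positivity)]



/-! ### mplus facts (for periodic nonneg x) -/

lemma iavg_eq_W (x : ℤ → ℝ) (i : ℤ) (r : ℕ) :
    iavg x (i+1) (i + (r:ℤ)) = W x i r / r := by
  unfold iavg W
  rw [sum_Icc_int_eq_range x i r]
  congr 1
  push_cast
  ring

section MplusFacts

variable {n : ℕ} {x : ℤ → ℝ}
variable (hn : 1 ≤ n) (hx0 : ∀ i, 0 ≤ x i) (hper : ∀ i, x (i + (n : ℤ)) = x i)

include hper in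
lemma periodic_iterate : ∀ (k i : ℤ), x (i + k * (n:ℤ)) = x i := by
  intro k
  induction k using Int.induction_on with
  | zero => simp
  | succ k ih =>
    intro i
    rw [show i + ((k:ℤ)+1) * (n:ℤ) = (i + (k:ℤ)*(n:ℤ)) + (n:ℤ) by ring, hper, ih i]
  | pred k ih =>
    intro i
    have h := hper (i + (-(k:ℤ)-1) * (n:ℤ))
    rw [show i + (-(k:ℤ)-1)*(n:ℤ) + (n:ℤ) = i + (-(k:ℤ))*(n:ℤ) by ring] at h
    rw [ih i] at h
    exact h.symm

include hn hx0 hper in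
lemma entry_le_sP : ∀ j : ℤ, x j ≤ W x 0 n := by
  intro j
  have hn0 : (0:ℤ) < (n:ℤ) := by exact_mod_cast hn
  have hrep : x j = x (1 + (j-1) % (n:ℤ)) := by
    have h := periodic_iterate hper ((j-1)/(n:ℤ)) (1 + (j-1) % (n:ℤ))
    rw [show 1 + (j-1) % (n:ℤ) + ((j-1)/(n:ℤ)) * (n:ℤ) = j by
      linear_combination Int.emod_add_mul_ediv (j-1) (n:ℤ)] at h
    exact h
  have he1 : 0 ≤ (j-1) % (n:ℤ) := Int.emod_nonneg _ (by omega)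
  have he2 : (j-1) % (n:ℤ) < (n:ℤ) := Int.emod_lt_of_pos _ hn0
  set k0 : ℕ := ((j-1) % (n:ℤ)).toNat with hk0
  have hk0n : k0 < n := by omega
  have harg : (1 : ℤ) + (j-1) % (n:ℤ) = 0 + 1 + (k0 : ℤ) := by omega
  rw [hrep, harg]
  exact Finset.single_le_sum (f := fun k : ℕ => x (0 + 1 + (k:ℤ)))
    (fun i _ => hx0 _) (Finset.mem_range.mpr hk0n)

include hn hx0 hper in
lemma avg_le_sP (i : ℤ) {r : ℕ} (hr : 1 ≤ r) :
    iavg x (i+1) (i + (r:ℤ)) ≤ W x 0 n := by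
  rw [iavg_eq_W]
  have hrpos : (0:ℝ) < (r:ℝ) := by exact_mod_cast hr
  rw [div_le_iff₀ hrpos]
  have : W x i r ≤ ∑ _k ∈ Finset.range r, W x 0 n := by
    apply Finset.sum_le_sum
    intro k _
    exact entry_le_sP hn hx0 hper _
  simpa [mul_comm] using this

include hn hx0 hper in
lemma bddAbove_avgset (i : ℤ) :
    BddAbove {a : ℝ | ∃ r : ℕ, 1 ≤ r ∧ a = iavg x (i + 1) (i + (r : ℤ))} := by
  refine ⟨W x 0 n, ?_⟩
  rintro a ⟨r, hr, rfl⟩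
  exact avg_le_sP hn hx0 hper i hr

include hn hx0 hper in
lemma le_mplus (i : ℤ) {r : ℕ} (hr : 1 ≤ r) :
    iavg x (i+1) (i + (r:ℤ)) ≤ mplus x i :=
  le_csSup (bddAbove_avgset hn hx0 hper i) ⟨r, hr, rfl⟩

include hn hx0 hper in
lemma A_le_mplus (i : ℤ) : W x 0 n / n ≤ mplus x i := by
  have h := le_mplus hn hx0 hper i hn
  rwa [iavg_eq_W, W_full hper i] at h

include hn hx0 hper in
lemma mplus_pos (hs : 0 < W x 0 n) (i : ℤ) : 0 < mplus x i := by
  have := A_le_mplus hn hx0 hper i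
  have hA : (0:ℝ) < W x 0 n / n := by
    apply div_pos hs
    exact_mod_cast hn
  linarith

lemma mplus_le_of (i : ℤ) {b : ℝ} (hb : 0 ≤ b)
    (h : ∀ r : ℕ, 1 ≤ r → iavg x (i+1) (i + (r:ℤ)) ≤ b) : mplus x i ≤ b := by
  apply Real.sSup_le _ hb
  rintro a ⟨r, hr, rfl⟩
  exact h r hr

include hper in
lemma mplus_shift_per (i : ℤ) : mplus x (i + (n:ℤ)) = mplus x i := by
  unfold mplus
  congr 1
  ext a
  simp only [Set.mem_setOf_eq]
  apply exists_congr
  intro r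
  apply and_congr_right
  intro hr
  have h1 : iavg x (i + (n:ℤ) + 1) (i + (n:ℤ) + (r:ℤ)) = iavg x (i+1) (i + (r:ℤ)) := by
    rw [iavg_eq_W, iavg_eq_W, W_periodic hper]
  rw [h1]

end MplusFacts



/-! ### Direction B: `PhiE ≤ TtilStar` -/

lemma dirB_key (n : ℕ) (hn : 1 ≤ n) (y : ℤ → ℝ) (hy : y ∈ Delta n) :
    ∃ x : ℤ → ℝ, ((∀ i, 0 ≤ x i) ∧ (∀ i, x (i + (n:ℤ)) = x i) ∧ (∃ i, x i ≠ 0)) ∧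
      SmaxE n x ≤ Ttil n y (1 / (n:ℝ)) := by
  obtain ⟨hy0, hyl, hyr, hysum⟩ := hy
  have hn0 : (0:ℤ) < (n:ℤ) := by exact_mod_cast hn
  set xb : ℤ → ℝ := fun i => y ((i - 1) % (n:ℤ) + 1 - (n:ℤ)) with hxb
  have hxbper : ∀ i, xb (i + (n:ℤ)) = xb i := by
    intro i
    simp only [hxb]
    have he : (i + (n:ℤ) - 1) % (n:ℤ) = (i - 1) % (n:ℤ) := by
      rw [show i + (n:ℤ) - 1 = (i - 1) + (n:ℤ) * 1 by ring, Int.add_mul_emod_self_left]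
    rw [he]
  have hxb0 : ∀ i, 0 ≤ xb i := fun i => hy0 _
  have hrep : ∀ i : ℤ, 1 ≤ i → i ≤ (n:ℤ) → xb i = y (i - (n:ℤ)) := by
    intro i h1 h2
    simp only [hxb]
    congr 1
    rw [Int.emod_eq_of_lt (by omega) (by omega)]
    ring
  have hex : ∃ j ∈ Finset.Icc (1 - (n:ℤ)) 0, y j ≠ 0 := by
    by_contra hno
    push_neg at hno
    have h0 : ∑ i ∈ Finset.Icc (1-(n:ℤ)) 0, y i = 0 :=
      Finset.sum_eq_zero (fun i hi => hno i hi)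
    rw [hysum] at h0
    norm_num at h0
  obtain ⟨j, hjmem, hjne⟩ := hex
  have hjb := Finset.mem_Icc.mp hjmem
  have hxbne : ∃ i, xb i ≠ 0 := by
    refine ⟨j + (n:ℤ), ?_⟩
    rw [hrep (j + (n:ℤ)) (by omega) (by omega),
      show j + (n:ℤ) - (n:ℤ) = j by ring]
    exact hjne
  have hW1 : W xb 0 n = 1 := by
    have h1 : W xb 0 n = ∑ k ∈ Finset.range n, y (1 - (n:ℤ) + (k:ℤ)) := by
      unfold W
      apply Finset.sum_congr rfl
      intro k hk
      have hk' := Finset.mem_range.mp hk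
      rw [hrep (0 + 1 + (k:ℤ)) (by omega) (by omega)]
      congr 1
      ring
    have h2 : ∑ i ∈ Finset.Icc (1 - (n:ℤ)) 0, y i
        = ∑ k ∈ Finset.range n, y (1 - (n:ℤ) + (k:ℤ)) := by
      have h3 := sum_Icc_int_eq_range y (-(n:ℤ)) n
      rw [show -(n:ℤ) + (n:ℤ) = 0 by ring, show -(n:ℤ) + 1 = 1 - (n:ℤ) by ring] at h3
      exact h3
    rw [h1, ← h2, hysum]
  have hm1 : ∀ i : ℤ, xb (i+1) ≤ mplus xb i := by
    intro i
    have h := le_mplus hn hxb0 hxbper i (r := 1) le_rfl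
    rw [iavg_eq_W, W_one] at h
    simpa using h
  have hmn : (1:ℝ)/(n:ℝ) ≤ mplus xb (n:ℤ) := by
    have h := le_mplus hn hxb0 hxbper (n:ℤ) (r := n) hn
    rw [iavg_eq_W, W_full hxbper, hW1] at h
    exact h
  refine ⟨xb, ⟨hxb0, hxbper, hxbne⟩, ?_⟩
  -- rewrite SmaxE as a range sum with the last term split off
  have hS : SmaxE n xb = (∑ k ∈ Finset.range (n-1),
      ENNReal.ofReal (xb (0+1+(k:ℤ))) / ENNReal.ofReal (mplus xb (0+1+(k:ℤ))))
      + ENNReal.ofReal (xb (n:ℤ)) / ENNReal.ofReal (mplus xb (n:ℤ)) := by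
    unfold SmaxE
    have h0 : Finset.Icc (1:ℤ) (n:ℤ) = Finset.Icc ((0:ℤ)+1) (0 + (n:ℤ)) := by norm_num
    rw [h0, sum_Icc_int_eq_range (fun i => ENNReal.ofReal (xb i)/ENNReal.ofReal (mplus xb i)) 0 n]
    have h1 : Finset.range n = Finset.range ((n-1)+1) := by congr 1; omega
    rw [h1, Finset.sum_range_succ]
    congr 1
    rw [show (0:ℤ)+1+((n-1:ℕ):ℤ) = (n:ℤ) by omega]
  have hT : (∑ i ∈ Finset.Icc (1 - (n:ℤ)) (-1),
      ENNReal.ofReal (y i) / ENNReal.ofReal (y (i+1)))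
      = ∑ k ∈ Finset.range (n-1),
        ENNReal.ofReal (y (1-(n:ℤ)+(k:ℤ))) / ENNReal.ofReal (y (1-(n:ℤ)+(k:ℤ)+1)) := by
    have h3 := sum_Icc_int_eq_range
      (fun i => ENNReal.ofReal (y i) / ENNReal.ofReal (y (i+1))) (-(n:ℤ)) (n-1)
    rw [show -(n:ℤ) + ((n-1:ℕ):ℤ) = -1 by omega,
      show -(n:ℤ) + 1 = 1 - (n:ℤ) by ring] at h3
    exact h3
  rw [hS]
  unfold Ttil
  rw [hT]
  apply add_le_add
  · apply Finset.sum_le_sum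
    intro k hk
    have hk' := Finset.mem_range.mp hk
    have hnum : xb (0+1+(k:ℤ)) = y (1-(n:ℤ)+(k:ℤ)) := by
      rw [hrep (0+1+(k:ℤ)) (by omega) (by omega)]
      congr 1
      ring
    have hden : y (1-(n:ℤ)+(k:ℤ)+1) = xb (0+1+(k:ℤ)+1) := by
      rw [hrep (0+1+(k:ℤ)+1) (by omega) (by omega)]
      congr 1
      ring
    rw [hnum, hden]
    apply ENNReal.div_le_div_left
    exact ENNReal.ofReal_le_ofReal (hm1 (0+1+(k:ℤ)))
  · have hxbn : xb (n:ℤ) = y 0 := by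
      rw [hrep (n:ℤ) (by omega) le_rfl, show (n:ℤ) - (n:ℤ) = 0 by ring]
    rw [hxbn]
    apply ENNReal.div_le_div_left
    exact ENNReal.ofReal_le_ofReal hmn



/-! ### Direction A ingredients -/

lemma mplus_eq_A {n : ℕ} {xs : ℤ → ℝ} (hn : 1 ≤ n) (hxs0 : ∀ i, 0 ≤ xs i)
    (hxsper : ∀ i, xs (i + (n : ℤ)) = xs i)
    (hstar : ∀ r : ℕ, 1 ≤ r → W xs (n:ℤ) r ≤ (r:ℝ) * (W xs 0 n / n)) :
    mplus xs (n:ℤ) = W xs 0 n / n := by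
  have hA0 : 0 ≤ W xs 0 n / n := by
    apply div_nonneg (W_nonneg hxs0 0 n)
    positivity
  apply le_antisymm
  · apply mplus_le_of ((n:ℤ)) hA0
    intro r hr
    rw [iavg_eq_W]
    have hrpos : (0:ℝ) < (r:ℝ) := by exact_mod_cast hr
    rw [div_le_iff₀ hrpos]
    have := hstar r hr
    linarith [this]
  · have h := le_mplus hn hxs0 hxsper (n:ℤ) (r := n) hn
    rwa [iavg_eq_W, W_full hxsper] at h

lemma mplus_eq_win {n : ℕ} {xs : ℤ → ℝ} (hn : 1 ≤ n) (hxs0 : ∀ i, 0 ≤ xs i)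
    (hxsper : ∀ i, xs (i + (n : ℤ)) = xs i)
    (hstar : ∀ r : ℕ, 1 ≤ r → W xs (n:ℤ) r ≤ (r:ℝ) * (W xs 0 n / n))
    (i : ℕ) (h1 : 1 ≤ i) (h2 : i < n) :
    mplus xs (i:ℤ) = maxAvg (win xs (i:ℤ) (n - i)) := by
  set A := W xs 0 n / n with hA
  set v := maxAvg (win xs (i:ℤ) (n-i)) with hv
  have hni1 : 1 ≤ n - i := by omega
  have hA0 : 0 ≤ A := by
    apply div_nonneg (W_nonneg hxs0 0 n)
    positivity
  have hnA : (n:ℝ) * A = W xs 0 n := by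
    rw [hA]
    field_simp
  -- A ≤ v
  have hWi : W xs 0 i ≤ (i:ℝ) * A := by
    have hp : W xs ((0:ℤ) + (n:ℤ)) i = W xs 0 i := W_periodic hxsper 0 i
    rw [show (0:ℤ) + (n:ℤ) = (n:ℤ) by ring] at hp
    have h2' := hstar i h1
    rw [hp] at h2'
    exact h2'
  have hsplit : W xs 0 n = W xs 0 i + W xs (i:ℤ) (n - i) := by
    have h := W_add xs 0 i (n - i)
    rw [show i + (n - i) = n by omega, show (0:ℤ) + (i:ℤ) = (i:ℤ) by ring] at h
    exact h
  have hnipos : (0:ℝ) < ((n - i:ℕ):ℝ) := by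
    have : 0 < n - i := by omega
    exact_mod_cast this
  have hAavg : A ≤ W xs (i:ℤ) (n-i) / ((n-i:ℕ):ℝ) := by
    rw [le_div_iff₀ hnipos]
    have hcast : ((n - i:ℕ):ℝ) = (n:ℝ) - (i:ℝ) := by
      push_cast [Nat.cast_sub h2.le]
      ring
    rw [hcast]
    have hring : A * ((n:ℝ) - (i:ℝ)) = (n:ℝ) * A - (i:ℝ) * A := by ring
    rw [hring]
    linarith [hWi, hsplit, hnA]
  have hAv : A ≤ v := le_trans hAavg (avg_le_maxAvg_win xs (i:ℤ) hni1 le_rfl)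
  have hv0 : 0 ≤ v := le_trans hA0 hAv
  apply le_antisymm
  · apply mplus_le_of ((i:ℤ)) hv0
    intro r hr
    rw [iavg_eq_W]
    have hrpos : (0:ℝ) < (r:ℝ) := by exact_mod_cast hr
    rw [div_le_iff₀ hrpos]
    by_cases hrle : r ≤ n - i
    · have h := avg_le_maxAvg_win xs (i:ℤ) hr hrle
      rw [div_le_iff₀ hrpos] at h
      exact h
    · push_neg at hrle
      set r' := r - (n - i) with hr'
      have hr'1 : 1 ≤ r' := by omega
      have hWsplit : W xs (i:ℤ) r = W xs (i:ℤ) (n-i) + W xs ((i:ℤ) + ((n-i:ℕ):ℤ)) r' := by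
        have h := W_add xs (i:ℤ) (n-i) r'
        rw [show (n - i) + r' = r by omega] at h
        exact h
      have hidx : (i:ℤ) + ((n-i:ℕ):ℤ) = (n:ℤ) := by omega
      rw [hidx] at hWsplit
      have hB1 : W xs (i:ℤ) (n-i) ≤ ((n-i:ℕ):ℝ) * v := by
        have h := avg_le_maxAvg_win xs (i:ℤ) hni1 le_rfl
        rw [div_le_iff₀ hnipos] at h
        linarith [h]
      have hB2 : W xs (n:ℤ) r' ≤ (r':ℝ) * A := hstar r' hr'1
      have hB3 : (r':ℝ) * A ≤ (r':ℝ) * v := by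
        apply mul_le_mul_of_nonneg_left hAv
        positivity
      have hcast2 : ((n-i:ℕ):ℝ) + (r':ℝ) = (r:ℝ) := by
        have : (n - i) + r' = r := by omega
        exact_mod_cast congrArg (fun t : ℕ => (t:ℝ)) this
      calc W xs (i:ℤ) r = W xs (i:ℤ) (n-i) + W xs (n:ℤ) r' := hWsplit
        _ ≤ ((n-i:ℕ):ℝ) * v + (r':ℝ) * v := by linarith [hB1, hB2, hB3]
        _ = (((n-i:ℕ):ℝ) + (r':ℝ)) * v := by ring
        _ = v * (r:ℝ) := by rw [hcast2]; ring
  · apply maxAvg_win_le xs ((i:ℤ)) hni1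
    intro j hj1 hj2
    have h := le_mplus hn hxs0 hxsper (i:ℤ) (r := j) hj1
    rwa [iavg_eq_W] at h

lemma bridge (n : ℕ) (hn : 1 ≤ n) (xs : ℤ → ℝ)
    (hmn : mplus xs (n:ℤ) = W xs 0 n / n)
    (hmi : ∀ i : ℕ, 1 ≤ i → i < n → mplus xs (i:ℤ) = maxAvg (win xs (i:ℤ) (n - i))) :
    SmaxE n xs = Gcost (W xs 0 n / n) (win xs 0 n) := by
  obtain ⟨m, rfl⟩ : ∃ m, n = m + 1 := ⟨n - 1, by omega⟩
  unfold SmaxE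
  rw [show Finset.Icc (1:ℤ) ((m+1:ℕ):ℤ) = Finset.Icc ((0:ℤ)+1) (0+((m+1:ℕ):ℤ)) by norm_num]
  rw [sum_Icc_int_eq_range (fun i => ENNReal.ofReal (xs i) / ENNReal.ofReal (mplus xs i)) 0 (m+1),
    Finset.sum_range_succ, Gcost_win]
  congr 1
  · apply Finset.sum_congr rfl
    intro k hk
    have hk' := Finset.mem_range.mp hk
    have h1 : mplus xs (0+1+(k:ℤ)) = maxAvg (win xs (0+1+(k:ℤ)) (m - k)) := by
      have h := hmi (1+k) (by omega) (by omega)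
      rw [show ((1+k:ℕ):ℤ) = 0+1+(k:ℤ) by push_cast; ring] at h
      rw [show (m+1) - (1+k) = m - k by omega] at h
      exact h
    rw [h1]
  · rw [show (0:ℤ)+1+((m:ℕ):ℤ) = ((m+1:ℕ):ℤ) by push_cast; ring, hmn]



lemma dirA_key (n : ℕ) (hn : 1 ≤ n) (x : ℤ → ℝ) (hx0 : ∀ i, 0 ≤ x i)
    (hper : ∀ i, x (i + (n:ℤ)) = x i) (hne : ∃ i, x i ≠ 0) :
    ∃ y ∈ Delta n, Ttil n y (1 / (n:ℝ)) ≤ SmaxE n x := by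
  have hn0R : (0:ℝ) < (n:ℝ) := by exact_mod_cast hn
  have hn0 : (0:ℤ) < (n:ℤ) := by exact_mod_cast hn
  -- period sum is positive
  have hsP : 0 < W x 0 n := by
    obtain ⟨i, hi⟩ := hne
    have hxi : 0 < x i := lt_of_le_of_ne (hx0 i) (Ne.symm hi)
    have hrep : x i = x (1 + (i-1) % (n:ℤ)) := by
      have h := periodic_iterate hper ((i-1)/(n:ℤ)) (1 + (i-1) % (n:ℤ))
      rw [show 1 + (i-1) % (n:ℤ) + ((i-1)/(n:ℤ)) * (n:ℤ) = i by
        linear_combination Int.emod_add_mul_ediv (i-1) (n:ℤ)] at h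
      exact h
    have he1 : 0 ≤ (i-1) % (n:ℤ) := Int.emod_nonneg _ (by omega)
    have he2 : (i-1) % (n:ℤ) < (n:ℤ) := Int.emod_lt_of_pos _ hn0
    set k0 : ℕ := ((i-1) % (n:ℤ)).toNat with hk0
    have hk0n : k0 < n := by omega
    have harg : (1 : ℤ) + (i-1) % (n:ℤ) = 0 + 1 + (k0 : ℤ) := by omega
    have hsingle : x (0 + 1 + (k0:ℤ)) ≤ W x 0 n :=
      Finset.single_le_sum (f := fun k : ℕ => x (0 + 1 + (k:ℤ)))
        (fun l _ => hx0 _) (Finset.mem_range.mpr hk0n)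
    rw [hrep, harg] at hxi
    linarith
  set A := W x 0 n / n with hA
  have hApos : 0 < A := div_pos hsP hn0R
  -- argmax of partial sums
  set H : ℕ → ℝ := fun j => W x 0 j - j * A with hH
  obtain ⟨i0, hi0mem, hi0max⟩ := Finset.exists_max_image (Finset.Icc 1 n) H
    ⟨1, Finset.mem_Icc.mpr ⟨le_rfl, hn⟩⟩
  have hi0b := Finset.mem_Icc.mp hi0mem
  have hnA : (n:ℝ) * A = W x 0 n := by rw [hA]; field_simp
  have hHper : ∀ j : ℕ, H (j + n) = H j := by
    intro j
    simp only [hH]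
    have h1 : W x 0 (j + n) = W x 0 j + W x ((0:ℤ)+(j:ℤ)) n := W_add x 0 j n
    have h2 : W x ((0:ℤ)+(j:ℤ)) n = W x 0 n := W_full hper _
    rw [h1, h2]
    push_cast
    linarith [hnA]
  have hHmax : ∀ j : ℕ, 1 ≤ j → H j ≤ H i0 := by
    intro j
    induction j using Nat.strong_induction_on with
    | _ j ih =>
      intro hj
      by_cases hjn : j ≤ n
      · exact hi0max j (Finset.mem_Icc.mpr ⟨hj, hjn⟩)
      · have hj' : H j = H (j - n) := by
          conv_lhs => rw [show j = (j - n) + n by omega]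
          exact hHper (j - n)
        rw [hj']
        exact ih (j - n) (by omega) (by omega)
  have hstar0 : ∀ r : ℕ, 1 ≤ r → W x (i0:ℤ) r ≤ (r:ℝ) * A := by
    intro r hr
    have hsplit : W x 0 (i0 + r) = W x 0 i0 + W x ((0:ℤ)+(i0:ℤ)) r := W_add x 0 i0 r
    rw [show (0:ℤ)+(i0:ℤ) = (i0:ℤ) by ring] at hsplit
    have hmax := hHmax (i0 + r) (by omega)
    have hmax0 := hi0max i0 hi0mem
    simp only [hH] at hmax
    rw [hsplit] at hmax
    push_cast at hmax
    linarith [hmax]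
  -- shifted sequence
  set xs : ℤ → ℝ := fun j => x (j + (i0:ℤ)) with hxs
  have hxs0 : ∀ i, 0 ≤ xs i := fun i => hx0 _
  have hxsper : ∀ i, xs (i + (n:ℤ)) = xs i := by
    intro i
    simp only [hxs]
    rw [show i + (n:ℤ) + (i0:ℤ) = (i + (i0:ℤ)) + (n:ℤ) by ring, hper]
  have hWshift : ∀ (i : ℤ) (r : ℕ), W xs i r = W x (i + (i0:ℤ)) r := by
    intro i r
    unfold W
    apply Finset.sum_congr rfl
    intro k _
    simp only [hxs]
    congr 1
    ring
  have hsP' : W xs 0 n = W x 0 n := by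
    rw [hWshift]
    exact W_full hper _
  have hstar : ∀ r : ℕ, 1 ≤ r → W xs (n:ℤ) r ≤ (r:ℝ) * (W xs 0 n / n) := by
    intro r hr
    rw [hWshift, hsP']
    have hp : W x ((i0:ℤ) + (n:ℤ)) r = W x (i0:ℤ) r := W_periodic hper (i0:ℤ) r
    rw [show (n:ℤ) + (i0:ℤ) = (i0:ℤ) + (n:ℤ) by ring, hp]
    exact hstar0 r hr
  -- SmaxE shift invariance
  set g : ℤ → ℝ≥0∞ := fun i => ENNReal.ofReal (x i) / ENNReal.ofReal (mplus x i) with hg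
  have hgper : ∀ i, g (i + (n:ℤ)) = g i := by
    intro i
    simp only [hg]
    rw [hper i, mplus_shift_per hper i]
  have hgfin : ∀ i, g i ≠ ⊤ := by
    intro i
    have h1 : 0 < mplus x i := mplus_pos hn hx0 hper hsP i
    exact (ENNReal.div_lt_top ENNReal.ofReal_ne_top
      (by rw [Ne, ENNReal.ofReal_eq_zero]; push_neg; exact h1)).ne
  have hmplus_shift : ∀ i : ℤ, mplus xs i = mplus x (i + (i0:ℤ)) := by
    intro i
    unfold mplus
    congr 1
    ext a
    simp only [Set.mem_setOf_eq]
    apply exists_congr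
    intro r
    apply and_congr_right
    intro hr
    rw [iavg_eq_W, iavg_eq_W, hWshift]
  have hSshift : SmaxE n xs = SmaxE n x := by
    unfold SmaxE
    rw [show Finset.Icc (1:ℤ) ((n:ℕ):ℤ) = Finset.Icc ((0:ℤ)+1) (0+((n:ℕ):ℤ)) by norm_num]
    rw [sum_Icc_int_eq_range (fun i => ENNReal.ofReal (xs i) / ENNReal.ofReal (mplus xs i)) 0 n,
      sum_Icc_int_eq_range (fun i => ENNReal.ofReal (x i) / ENNReal.ofReal (mplus x i)) 0 n]
    have hL : ∀ k ∈ Finset.range n,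
        ENNReal.ofReal (xs (0+1+(k:ℤ))) / ENNReal.ofReal (mplus xs (0+1+(k:ℤ)))
          = g ((1 + (i0:ℤ)) + (k:ℤ)) := by
      intro k _
      rw [hmplus_shift]
      simp only [hxs, hg]
      rw [show (0:ℤ)+1+(k:ℤ)+(i0:ℤ) = 1 + (i0:ℤ) + (k:ℤ) by ring]
    have hR : ∀ k ∈ Finset.range n,
        ENNReal.ofReal (x (0+1+(k:ℤ))) / ENNReal.ofReal (mplus x (0+1+(k:ℤ)))
          = g (1 + (k:ℤ)) := by
      intro k _
      simp only [hg]
      norm_num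
    rw [Finset.sum_congr rfl hL, Finset.sum_congr rfl hR,
      rot_enn hgper hgfin (1 + (i0:ℤ)), rot_enn hgper hgfin 1]
  -- identify mplus values for the shifted sequence
  have hmnA : mplus xs (n:ℤ) = W xs 0 n / n := mplus_eq_A hn hxs0 hxsper hstar
  have hmiw : ∀ i : ℕ, 1 ≤ i → i < n → mplus xs (i:ℤ) = maxAvg (win xs (i:ℤ) (n - i)) :=
    fun i h1 h2 => mplus_eq_win hn hxs0 hxsper hstar i h1 h2
  have hbridge : SmaxE n xs = Gcost (W xs 0 n / n) (win xs 0 n) :=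
    bridge n hn xs hmnA hmiw
  have hAxs : W xs 0 n / n = A := by rw [hsP']
  -- apply the key combinatorial lemma
  obtain ⟨h, T, hh0, hth, hTnn, hsum, hlen, hdisj, hchain⟩ :=
    omega_lemma A (win xs 0 n) (win_ne_nil xs hn 0) (win_mem_nonneg hxs0 n 0) 0 le_rfl
  rw [ENNReal.ofReal_zero, ENNReal.zero_div, zero_add] at hchain
  have hGS : Gcost A (win xs 0 n) = SmaxE n x := by
    rw [← hAxs, ← hbridge, hSshift]
  rw [hGS] at hchain
  have hsum' : h + T.sum = W x 0 n := by
    rw [hsum, win_sum, hsP', zero_add]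
  rw [win_length] at hlen
  -- extract the witness list M
  have hM : ∃ M : List ℝ, M ≠ [] ∧ (∀ b ∈ M, 0 ≤ b) ∧ M.sum = W x 0 n ∧
      M.length ≤ n ∧ chainCost A M ≤ SmaxE n x := by
    by_cases hc : T.length + 1 ≤ n
    · refine ⟨h :: T, by simp, ?_, by simp [hsum'], by simpa using hc, hchain⟩
      intro b hb
      rcases List.mem_cons.mp hb with hb | hb
      · exact hb ▸ hh0
      · exact hTnn b hb
    · have hh : h = 0 := by
        rcases hdisj with h0 | hlen2
        · exact h0
        · rw [win_length] at hlen2; omega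
      have hTne : T ≠ [] := by
        intro e
        rw [e] at hsum'
        simp only [List.sum_nil, add_zero] at hsum'
        rw [hh] at hsum'
        linarith
      match T, hTne, hTnn, hsum', hlen, hchain with
      | (b :: T2), _, hTnn, hsum', hlen, hchain =>
        refine ⟨b :: T2, by simp, hTnn, by linarith [hsum', hh], hlen, ?_⟩
        have he : chainCost A ((0:ℝ) :: b :: T2) = chainCost A (b :: T2) :=
          chainCost_zero_cons A b T2
        rw [hh] at hchain
        rw [← he]
        exact hchain
  obtain ⟨M, hMne, hMnn, hMsum, hMlen, hMchain⟩ := hM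
  set k := M.length with hk
  have hk1 : 1 ≤ k := by
    rw [hk]
    exact List.length_pos_iff.mpr hMne
  have hkn : (k:ℤ) ≤ (n:ℤ) := by exact_mod_cast hMlen
  -- build the Delta element
  set w : ℤ → ℝ := fun i =>
    if 1 - (k:ℤ) ≤ i ∧ i ≤ 0 then M.getD (i + (k:ℤ) - 1).toNat 0 / W x 0 n else 0 with hw
  have hwnn : ∀ i, 0 ≤ w i := by
    intro i
    simp only [hw]
    split
    · exact div_nonneg (getD_nonneg hMnn _) hsP.le
    · exact le_rfl
  have hwl : ∀ i : ℤ, i ≤ -(n:ℤ) → w i = 0 := by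
    intro i hi
    simp only [hw]
    rw [if_neg (by omega)]
  have hwr : ∀ i : ℤ, 0 < i → w i = 0 := by
    intro i hi
    simp only [hw]
    rw [if_neg (by omega)]
  have hwval : ∀ j : ℕ, j < k → w ((j:ℤ) + 1 - (k:ℤ)) = M.getD j 0 / W x 0 n := by
    intro j hj
    simp only [hw]
    rw [if_pos (by omega)]
    rw [show (j:ℤ) + 1 - (k:ℤ) + (k:ℤ) - 1 = (j:ℤ) by ring]
    rw [Int.toNat_natCast]
  have hwsum : ∑ i ∈ Finset.Icc (1 - (n:ℤ)) 0, w i = 1 := by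
    have hsub : Finset.Icc (1 - (k:ℤ)) 0 ⊆ Finset.Icc (1 - (n:ℤ)) 0 := by
      intro i hi
      simp only [Finset.mem_Icc] at hi ⊢
      omega
    rw [← Finset.sum_subset hsub (fun i hi hni => by
      simp only [Finset.mem_Icc] at hi hni
      simp only [hw]
      rw [if_neg (by omega)])]
    have h3 := sum_Icc_int_eq_range w (-(k:ℤ)) k
    rw [show -(k:ℤ) + (k:ℤ) = 0 by ring, show -(k:ℤ) + 1 = 1 - (k:ℤ) by ring] at h3
    rw [h3]
    have hterm : ∀ j ∈ Finset.range k, w (1 - (k:ℤ) + (j:ℤ)) = M.getD j 0 / W x 0 n := by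
      intro j hj
      rw [show 1 - (k:ℤ) + (j:ℤ) = (j:ℤ) + 1 - (k:ℤ) by ring]
      exact hwval j (Finset.mem_range.mp hj)
    rw [Finset.sum_congr rfl hterm, ← Finset.sum_div, ← sum_getD, hMsum, div_self hsP.ne']
  have hTtilEq : Ttil n w (1/(n:ℝ)) = chainCost A M := by
    unfold Ttil
    have hfst : (∑ i ∈ Finset.Icc (1 - (n:ℤ)) (-1),
        ENNReal.ofReal (w i) / ENNReal.ofReal (w (i+1)))
        = ∑ j ∈ Finset.range (k-1),
            ENNReal.ofReal (M.getD j 0) / ENNReal.ofReal (M.getD (j+1) 0) := by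
      have hsub : Finset.Icc (1 - (k:ℤ)) (-1) ⊆ Finset.Icc (1 - (n:ℤ)) (-1) := by
        intro i hi
        simp only [Finset.mem_Icc] at hi ⊢
        omega
      rw [← Finset.sum_subset hsub (fun i hi hni => by
        simp only [Finset.mem_Icc] at hi hni
        have : w i = 0 := by
          simp only [hw]
          rw [if_neg (by omega)]
        rw [this, ENNReal.ofReal_zero, ENNReal.zero_div])]
      have h3 := sum_Icc_int_eq_range
        (fun i => ENNReal.ofReal (w i) / ENNReal.ofReal (w (i+1))) (-(k:ℤ)) (k-1)
      rw [show -(k:ℤ) + ((k-1:ℕ):ℤ) = -1 by omega, show -(k:ℤ) + 1 = 1 - (k:ℤ) by ring] at h3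
      rw [h3]
      apply Finset.sum_congr rfl
      intro j hj
      have hj' := Finset.mem_range.mp hj
      have e1 : w (1 - (k:ℤ) + (j:ℤ)) = M.getD j 0 / W x 0 n := by
        rw [show 1 - (k:ℤ) + (j:ℤ) = (j:ℤ) + 1 - (k:ℤ) by ring]
        exact hwval j (by omega)
      have e2 : w (1 - (k:ℤ) + (j:ℤ) + 1) = M.getD (j+1) 0 / W x 0 n := by
        rw [show 1 - (k:ℤ) + (j:ℤ) + 1 = ((j+1:ℕ):ℤ) + 1 - (k:ℤ) by push_cast; ring]
        exact hwval (j+1) (by omega)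
      rw [e1, e2, ofReal_div_div (getD_nonneg hMnn (j+1)) hsP]
    have hlast : ENNReal.ofReal (w 0) / ENNReal.ofReal (1/(n:ℝ))
        = ENNReal.ofReal (M.getD (k-1) 0) / ENNReal.ofReal A := by
      have e0 : w 0 = M.getD (k-1) 0 / W x 0 n := by
        have h := hwval (k-1) (by omega)
        rw [show ((k-1:ℕ):ℤ) + 1 - (k:ℤ) = 0 by omega] at h
        exact h
      rw [e0, hA, ofReal_div_one_div hsP hn0R]
    rw [hfst, hlast, chain_eq_sum A M hMne]
  refine ⟨w, ⟨hwnn, hwl, hwr, hwsum⟩, ?_⟩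
  rw [hTtilEq]
  exact hMchain

end PhiAux

/-- For every `n ≥ 1`, `Φ_n = T̃_n*(1/n)`. -/
theorem Phi_eq_TtilStar (n : ℕ) (hn : 1 ≤ n) :
    PhiE n = TtilStar n (1 / (n : ℝ)) := by
  apply le_antisymm
  · apply le_sInf
    rintro t ⟨y, hy, rfl⟩
    obtain ⟨x, ⟨h0, hp, hnz⟩, hle⟩ := PhiAux.dirB_key n hn y hy
    exact le_trans (sInf_le ⟨x, h0, hp, hnz, rfl⟩) hle
  · apply le_sInf
    rintro t ⟨x, h0, hp, hnz, rfl⟩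
    obtain ⟨y, hy, hle⟩ := PhiAux.dirA_key n hn x h0 hp hnz
    exact le_trans (sInf_le ⟨y, hy, rfl⟩) hle
end

section
/- For every nonnegative n-tuple x, min_{1≤i≤n} M^r x(i) = ā(x); in other words, M^r x(i) ≥ ā(x) for all i, and there exists an index i* such that the full interval [i* : i*+n−1] is maximal, i.e. a_{[i*:i*+n−1]}(x) = M^r x(i*). -/
open Finset

/-- Right maximal function `M^r x(i) = sup_{r ≥ 1} a_{[i : i+r−1]}(x)`. -/
noncomputable def Mr (x : ℤ → ℝ) (i : ℤ) : ℝ :=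
  sSup {a : ℝ | ∃ r : ℕ, 1 ≤ r ∧ a = iavg x i (i + (r : ℤ) - 1)}

/-!
Every window of length `n` has average `ā`, and a periodic sequence is bounded, so
`M^r x(i) ≥ ā`. For the reverse inequality at one point ("rising sun"), maximise the periodic
potential `P m = ∑_{k < m} (x_{1+k} - ā)` over a period at `m₀`: every right partial sum of
`x - ā` starting at `1 + m₀` equals `P (m₀ + r) - P m₀ ≤ 0`.
-/

open Function

theorem iavg_eq_sum_range_div (x : ℤ → ℝ) (i : ℤ) (r : ℕ) :
    iavg x i (i + r - 1) = (∑ k ∈ range r, x (i + k)) / r := by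
  rw [iavg, show i + r - 1 - i + 1 = (r : ℤ) by ring, Int.cast_natCast]
  congr 1
  symm
  apply sum_nbij' (fun k : ℕ => i + k) (fun j => (j - i).toNat) <;> intro a ha <;>
    simp only [mem_range, mem_Icc] at ha ⊢ <;> omega

theorem iavg_le_of_forall_le {x : ℤ → ℝ} {B : ℝ} (hB : ∀ j, x j ≤ B) (i : ℤ) {r : ℕ}
    (hr : 1 ≤ r) : iavg x i (i + r - 1) ≤ B := by
  rw [iavg_eq_sum_range_div, div_le_iff₀ (by positivity), mul_comm]
  simpa using sum_le_card_nsmul (range r) (fun k => x (i + k)) B fun k _ => hB (i + k)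

theorem le_Mr_of_bddAbove_range {x : ℤ → ℝ} (hx : BddAbove (Set.range x)) (i : ℤ) {r : ℕ}
    (hr : 1 ≤ r) : iavg x i (i + r - 1) ≤ Mr x i := by
  obtain ⟨B, hB⟩ := hx
  refine le_csSup ⟨B, ?_⟩ ⟨r, hr, rfl⟩
  rintro _ ⟨s, hs, rfl⟩
  exact iavg_le_of_forall_le (fun j => hB ⟨j, rfl⟩) i hs

theorem Mr_le {x : ℤ → ℝ} {i : ℤ} {c : ℝ} (h : ∀ r : ℕ, 1 ≤ r → iavg x i (i + r - 1) ≤ c) :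
    Mr x i ≤ c :=
  csSup_le ⟨_, 1, le_rfl, rfl⟩ fun _ ⟨r, hr, ha⟩ => ha ▸ h r hr

namespace Function.Periodic

variable {M : Type*} {f : ℤ → M} {n : ℕ}

theorem sum_range_add_eq [AddCancelCommMonoid M] (h : Periodic f n) (i : ℤ) :
    ∑ k ∈ range n, f (i + k) = ∑ k ∈ range n, f k := by
  have hshift : Periodic (fun i : ℤ => ∑ k ∈ range n, f (i + k)) 1 := by
    intro i
    have hsucc := sum_range_succ (fun k : ℕ => f (i + k)) n
    rw [sum_range_succ', h i, Nat.cast_zero, add_zero] at hsucc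
    refine (sum_congr rfl fun k _ => ?_).trans (add_right_cancel hsucc)
    rw [Nat.cast_succ, add_right_comm, add_assoc]
  simpa using hshift.int_mul_eq i

theorem bddAbove_range [Preorder M] [IsDirectedOrder M] [Nonempty M] (h : Periodic f n)
    (hn : 0 < n) : BddAbove (Set.range f) := by
  refine ((Set.finite_Ico 0 (n : ℤ)).image f).bddAbove.mono ?_
  rintro _ ⟨j, rfl⟩
  obtain ⟨y, hy, hfy⟩ := h.exists_mem_Ico₀ (by exact_mod_cast hn) j
  exact ⟨y, hy, hfy.symm⟩

theorem exists_forall_sum_range_nonpos [AddCommGroup M] [LinearOrder M] [IsOrderedAddMonoid M]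
    (h : Periodic f n) (hn : 0 < n) (hsum : ∑ k ∈ range n, f k = 0) :
    ∃ i ∈ Icc (1 : ℤ) n, ∀ r : ℕ, ∑ k ∈ range r, f (i + k) ≤ 0 := by
  set P : ℕ → M := fun m => ∑ k ∈ range m, f (1 + k)
  have hP_add : ∀ m r, P (m + r) = P m + ∑ k ∈ range r, f (1 + m + k) := fun m r => by
    simp only [P, sum_range_add, Nat.cast_add, add_assoc]
  have hP : Periodic P n := fun m => by rw [hP_add, h.sum_range_add_eq, hsum, add_zero]
  obtain ⟨m₀, hm₀, hmax⟩ := exists_max_image (range n) P (nonempty_range_iff.mpr hn.ne')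
  refine ⟨1 + m₀, by simp only [mem_range, mem_Icc] at hm₀ ⊢; omega, fun r => ?_⟩
  have hle : P (m₀ + r) ≤ P m₀ :=
    hP.map_mod_nat (m₀ + r) ▸ hmax _ (mem_range.mpr (Nat.mod_lt _ hn))
  rwa [hP_add, add_le_iff_nonpos_right] at hle

end Function.Periodic

theorem min_right_maximal_eq_mean_general (n : ℕ) (hn : 1 ≤ n) (x : ℤ → ℝ)
    (hper : ∀ i, x (i + (n : ℤ)) = x i) :
    (∀ i : ℤ, iavg x 1 (n : ℤ) ≤ Mr x i) ∧
    ∃ i ∈ Finset.Icc (1 : ℤ) (n : ℤ), iavg x i (i + (n : ℤ) - 1) = Mr x i := by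
  have hx : Periodic x n := hper
  set A := (∑ k ∈ range n, x k) / n
  have hwindow : ∀ i, iavg x i (i + n - 1) = A := fun i => by
    rw [iavg_eq_sum_range_div, hx.sum_range_add_eq]
  have hlower : ∀ i, A ≤ Mr x i := fun i =>
    hwindow i ▸ le_Mr_of_bddAbove_range (hx.bddAbove_range hn) i hn
  have hmean : iavg x 1 n = A := by simpa using hwindow 1
  refine ⟨hmean ▸ hlower, ?_⟩
  have hy : Periodic (fun j => x j - A) n := fun j => by simp only [hx j]
  have hy_sum : ∑ k ∈ range n, (x k - A) = 0 := by
    rw [sum_sub_distrib, sum_const, card_range, nsmul_eq_mul, mul_div_cancel₀ _ (by positivity),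
      sub_self]
  obtain ⟨i, hi, hsun⟩ := hy.exists_forall_sum_range_nonpos hn hy_sum
  refine ⟨i, hi, (hwindow i).trans (le_antisymm (hlower i) (Mr_le fun r hr => ?_))⟩
  have hr' := hsun r
  rw [sum_sub_distrib, sum_const, card_range, nsmul_eq_mul, sub_nonpos] at hr'
  rw [iavg_eq_sum_range_div, div_le_iff₀ (by positivity)]
  linarith

/-- `min_{1≤i≤n} M^r x(i) = ā(x)`: one has `M^r x(i) ≥ ā(x)` for all `i`, and
there exists `i*` with `a_{[i* : i*+n−1]}(x) = M^r x(i*)` (a full maximal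
interval). -/
theorem min_right_maximal_eq_mean (n : ℕ) (hn : 1 ≤ n) (x : ℤ → ℝ)
    (hpos : ∀ i, 0 ≤ x i) (hper : ∀ i, x (i + (n : ℤ)) = x i) :
    (∀ i : ℤ, iavg x 1 (n : ℤ) ≤ Mr x i) ∧
    ∃ i ∈ Finset.Icc (1 : ℤ) (n : ℤ), iavg x i (i + (n : ℤ) - 1) = Mr x i :=
  min_right_maximal_eq_mean_general n hn x hper
end

section
/- Assume condition (*). If J = [i:k] is an M-interval and K = [k+1:k'] is any interval right-adjacent to J with |J| + |K| < 2n, then a_J(x) > a_K(x). -/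
open Finset

/-- Condition (*): `x_1, …, x_n` are linearly independent over `ℚ`. -/
def StarCond (n : ℕ) (x : ℤ → ℝ) : Prop :=
  LinearIndependent ℚ (fun i : Fin n => x ((i : ℤ) + 1))

/-- `[i:k]` is a (short) maximal interval: `0 ≤ k − i < n` and
`a_{[i:k]}(x) = M^r x(i)`. -/
def IsMaxInt (n : ℕ) (x : ℤ → ℝ) (i k : ℤ) : Prop :=
  i ≤ k ∧ k - i < (n : ℤ) ∧ iavg x i k = Mr x i

/-- `[i:k]` is an `M`-interval: maximal, and no `[i:k']` with `i ≤ k' < k`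
is maximal. -/
def IsMInt (n : ℕ) (x : ℤ → ℝ) (i k : ℤ) : Prop :=
  IsMaxInt n x i k ∧ ∀ k' : ℤ, i ≤ k' → k' < k → iavg x i k' ≠ Mr x i


open Finset

/-- Residue map: `j ↦ (j-1) mod n` as an element of `Fin n`. -/
def resFin (n : ℕ) (hn : 0 < n) (j : ℤ) : Fin n :=
  ⟨((j - 1) % (n : ℤ)).toNat, by
    have h0 : (0:ℤ) < (n:ℤ) := by exact_mod_cast hn
    have h1 : 0 ≤ (j - 1) % (n : ℤ) := Int.emod_nonneg _ (by omega)
    have h2 : (j - 1) % (n : ℤ) < n := Int.emod_lt_of_pos _ h0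
    omega⟩

lemma resFin_coe (n : ℕ) (hn : 0 < n) (j : ℤ) :
    ((resFin n hn j : ℕ) : ℤ) = (j - 1) % (n : ℤ) := by
  have h1 : 0 ≤ (j - 1) % (n : ℤ) := Int.emod_nonneg _ (by positivity)
  simp [resFin, Int.toNat_of_nonneg h1]

lemma periodic_int (n : ℕ) (x : ℤ → ℝ) (hper : ∀ i, x (i + (n:ℤ)) = x i)
    (a q : ℤ) : x (a + (n:ℤ) * q) = x a := by
  induction q using Int.induction_on with
  | zero => simp
  | succ q ih =>
      have := hper (a + (n:ℤ) * q)
      rw [show a + (n:ℤ) * ((q:ℤ) + 1) = a + (n:ℤ) * q + n by ring, this, ih]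
  | pred q ih =>
      have := hper (a + (n:ℤ) * (-(q:ℤ) - 1))
      rw [show a + (n:ℤ) * (-(q:ℤ) - 1) + n = a + (n:ℤ) * (-(q:ℤ)) by ring] at this
      rw [← this, ih]

lemma x_eq_res (n : ℕ) (hn : 0 < n) (x : ℤ → ℝ) (hper : ∀ i, x (i + (n:ℤ)) = x i)
    (j : ℤ) : x j = x (((resFin n hn j : ℕ) : ℤ) + 1) := by
  rw [resFin_coe]
  have := periodic_int n x hper ((j - 1) % (n:ℤ) + 1) ((j - 1) / (n:ℤ))
  have hdm : (n:ℤ) * ((j - 1) / (n:ℤ)) + (j - 1) % (n:ℤ) = j - 1 := Int.mul_ediv_add_emod _ _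
  rw [show (j - 1) % (n:ℤ) + 1 + (n:ℤ) * ((j - 1) / (n:ℤ)) = j by omega] at this
  exact this

lemma sum_decomp (n : ℕ) (hn : 0 < n) (x : ℤ → ℝ) (hper : ∀ i, x (i + (n:ℤ)) = x i)
    (a b : ℤ) :
    ∑ j ∈ Icc a b, x j
      = ∑ t : Fin n, (((Icc a b).filter (fun j => resFin n hn j = t)).card : ℝ)
          * x (((t : ℕ) : ℤ) + 1) := by
  rw [← Finset.sum_fiberwise (Icc a b) (resFin n hn) x]
  refine Finset.sum_congr rfl fun t _ => ?_
  rw [Finset.sum_congr rfl (fun j hj => ?_), Finset.sum_const, nsmul_eq_mul]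
  have hjt : resFin n hn j = t := (Finset.mem_filter.mp hj).2
  rw [x_eq_res n hn x hper j, hjt]

lemma resFin_eq_dvd (n : ℕ) (hn : 0 < n) {a b : ℤ}
    (h : resFin n hn a = resFin n hn b) : (n:ℤ) ∣ (b - a) := by
  have hv := congrArg (fun t : Fin n => ((t : ℕ) : ℤ)) h
  simp only [resFin_coe] at hv
  have hmod : a - 1 ≡ b - 1 [ZMOD (n:ℤ)] := hv
  have hd := Int.ModEq.dvd hmod
  rwa [show b - 1 - (a - 1) = b - a by ring] at hd

/-- If `J = [i:k]` is an `M`-interval and `K = [k+1:k']` is right-adjacent to it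
with `|J| + |K| < 2n`, then `a_J(x) > a_K(x)`. -/
theorem MInt_gt_right_adjacent (n : ℕ) (hn : 1 ≤ n) (x : ℤ → ℝ)
    (hpos : ∀ i, 0 ≤ x i) (hper : ∀ i, x (i + (n : ℤ)) = x i)
    (hstar : StarCond n x) (i k k' : ℤ) (hJ : IsMInt n x i k)
    (hK : k + 1 ≤ k') (hlen : (k - i + 1) + (k' - k) < 2 * (n : ℤ)) :
    iavg x (k + 1) k' < iavg x i k := by
  obtain ⟨⟨hik, hkn, havg⟩, hmin⟩ := hJ
  have hn0 : 0 < n := hn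
  have hnz : (0:ℤ) < (n:ℤ) := by exact_mod_cast hn
  set L : ℤ := k - i + 1 with hLdef
  set m : ℤ := k' - k with hmdef
  have hL1 : 1 ≤ L := by omega
  have hm1 : 1 ≤ m := by omega
  have hLn : L ≤ (n:ℤ) := by omega
  have hxB : ∀ j, x j ≤ ∑ t : Fin n, x (((t:ℕ):ℤ) + 1) := by
    intro j
    rw [x_eq_res n hn0 x hper j]
    exact Finset.single_le_sum (f := fun t : Fin n => x (((t:ℕ):ℤ) + 1))
      (fun t _ => hpos _) (Finset.mem_univ _)
  have hbdd : BddAbove {a : ℝ | ∃ r : ℕ, 1 ≤ r ∧ a = iavg x i (i + (r:ℤ) - 1)} := by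
    refine ⟨∑ t : Fin n, x (((t:ℕ):ℤ) + 1), fun a ha => ?_⟩
    obtain ⟨r, hr, rfl⟩ := ha
    have hrpos : (0:ℝ) < (r:ℝ) := by exact_mod_cast hr
    have hcard : (Finset.Icc i (i + (r:ℤ) - 1)).card = r := by
      rw [Int.card_Icc]; omega
    have hsum := Finset.sum_le_card_nsmul (Finset.Icc i (i + (r:ℤ) - 1)) x
      (∑ t : Fin n, x (((t:ℕ):ℤ) + 1)) (fun j _ => hxB j)
    rw [hcard, nsmul_eq_mul] at hsum
    rw [iavg, show i + (r:ℤ) - 1 - i + 1 = (r:ℤ) by ring]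
    rw [div_le_iff₀ (by exact_mod_cast hrpos)]
    push_cast
    linarith [hsum]
  have hmem : iavg x i k' ∈ {a : ℝ | ∃ r : ℕ, 1 ≤ r ∧ a = iavg x i (i + (r:ℤ) - 1)} := by
    refine ⟨(k' - i + 1).toNat, by omega, ?_⟩
    congr 1
    omega
  have hk'le : iavg x i k' ≤ iavg x i k := by
    rw [havg]; exact le_csSup hbdd hmem
  have hset : Finset.Icc i k' = Finset.Icc i k ∪ Finset.Icc (k+1) k' := by
    ext j; simp only [Finset.mem_Icc, Finset.mem_union]; omega
  have hdisj : Disjoint (Finset.Icc i k) (Finset.Icc (k+1) k') := by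
    rw [Finset.disjoint_left]
    intro a ha hb
    simp only [Finset.mem_Icc] at ha hb
    omega
  have hsplit : ∑ j ∈ Finset.Icc i k', x j
      = (∑ j ∈ Finset.Icc i k, x j) + ∑ j ∈ Finset.Icc (k+1) k', x j := by
    rw [hset, Finset.sum_union hdisj]
  set α : ℝ := iavg x i k with hα
  set β : ℝ := iavg x (k+1) k' with hβ
  have hLR : (0:ℝ) < (L:ℝ) := by exact_mod_cast (show (0:ℤ) < L by omega)
  have hmR : (0:ℝ) < (m:ℝ) := by exact_mod_cast (show (0:ℤ) < m by omega)
  have hSJ : α * (L:ℝ) = ∑ j ∈ Finset.Icc i k, x j := by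
    rw [hα, iavg]
    exact div_mul_cancel₀ _ (ne_of_gt hLR)
  have hSK : β * (m:ℝ) = ∑ j ∈ Finset.Icc (k+1) k', x j := by
    rw [hβ, iavg, show k' - (k+1) + 1 = m by omega]
    exact div_mul_cancel₀ _ (ne_of_gt hmR)
  have hdpos : (0:ℝ) < ((k' - i + 1 : ℤ):ℝ) := by
    exact_mod_cast (show (0:ℤ) < k' - i + 1 by omega)
  have h1 : ∑ j ∈ Finset.Icc i k', x j ≤ α * ((k' - i + 1 : ℤ):ℝ) := by
    have h := hk'le
    rw [hα] at h
    rw [show iavg x i k' = (∑ j ∈ Finset.Icc i k', x j) / ((k' - i + 1 : ℤ):ℝ) from rfl] at h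
    rw [div_le_iff₀ hdpos] at h
    linarith [h]
  have hcast : ((k' - i + 1 : ℤ):ℝ) = (L:ℝ) + (m:ℝ) := by
    rw [show k' - i + 1 = L + m by omega]; push_cast; ring
  have hβα : β ≤ α := by
    rw [hcast] at h1
    rw [hsplit, ← hSJ, ← hSK] at h1
    nlinarith [h1, hmR]
  rcases eq_or_lt_of_le hβα with heq | hlt
  · exfalso
    set cJ : Fin n → ℕ :=
      fun t => ((Finset.Icc i k).filter (fun j => resFin n hn0 j = t)).card with hcJdef
    set cK : Fin n → ℕ :=
      fun t => ((Finset.Icc (k+1) k').filter (fun j => resFin n hn0 j = t)).card with hcKdef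
    have hrel : (L:ℝ) * (∑ j ∈ Finset.Icc (k+1) k', x j)
        - (m:ℝ) * (∑ j ∈ Finset.Icc i k, x j) = 0 := by
      rw [← hSJ, ← hSK, heq]; ring
    have hzero : ∑ t : Fin n,
        (((L * (cK t : ℤ) - m * (cJ t : ℤ) : ℤ)):ℝ) * x (((t:ℕ):ℤ) + 1) = 0 := by
      have hptw : ∀ t : Fin n,
          (((L * (cK t : ℤ) - m * (cJ t : ℤ) : ℤ)):ℝ) * x (((t:ℕ):ℤ) + 1)
            = (L:ℝ) * ((cK t : ℝ) * x (((t:ℕ):ℤ) + 1))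
              - (m:ℝ) * ((cJ t : ℝ) * x (((t:ℕ):ℤ) + 1)) := by
        intro t; push_cast; ring
      rw [Finset.sum_congr rfl (fun t _ => hptw t), Finset.sum_sub_distrib,
        ← Finset.mul_sum, ← Finset.mul_sum]
      rw [← sum_decomp n hn0 x hper i k, ← sum_decomp n hn0 x hper (k+1) k']
      exact hrel
    have hsumQ : ∑ t : Fin n,
        ((L * (cK t : ℤ) - m * (cJ t : ℤ) : ℤ) : ℚ) • x (((t:ℕ):ℤ) + 1) = 0 := by
      have hptw : ∀ t : Fin n,
          ((L * (cK t : ℤ) - m * (cJ t : ℤ) : ℤ) : ℚ) • x (((t:ℕ):ℤ) + 1)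
            = (((L * (cK t : ℤ) - m * (cJ t : ℤ) : ℤ)):ℝ) * x (((t:ℕ):ℤ) + 1) := by
        intro t
        rw [Rat.smul_def]
        norm_cast
      rw [Finset.sum_congr rfl (fun t _ => hptw t)]
      exact hzero
    have hli := Fintype.linearIndependent_iff.mp hstar
      (fun t => ((L * (cK t : ℤ) - m * (cJ t : ℤ) : ℤ) : ℚ)) hsumQ (resFin n hn0 (k+1))
    set t₀ : Fin n := resFin n hn0 (k+1) with ht₀
    have hcoeff : L * (cK t₀ : ℤ) = m * (cJ t₀ : ℤ) := by
      have : ((L * (cK t₀ : ℤ) - m * (cJ t₀ : ℤ) : ℤ) : ℚ) = 0 := hli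
      have h2 : (L * (cK t₀ : ℤ) - m * (cJ t₀ : ℤ) : ℤ) = 0 := by exact_mod_cast this
      omega
    have hcK1 : 1 ≤ cK t₀ := by
      have hmemK : k + 1 ∈ (Finset.Icc (k+1) k').filter (fun j => resFin n hn0 j = t₀) :=
        Finset.mem_filter.mpr ⟨Finset.mem_Icc.mpr ⟨le_refl _, hK⟩, rfl⟩
      exact Finset.card_pos.mpr ⟨k + 1, hmemK⟩
    have hcJ1 : 1 ≤ cJ t₀ := by
      by_contra hc
      have hc0 : (cJ t₀ : ℤ) = 0 := by omega
      rw [hc0, mul_zero] at hcoeff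
      rcases mul_eq_zero.mp hcoeff with h | h
      · omega
      · omega
    have hmem_eq : ∀ j', j' ∈ (Finset.Icc i k).filter (fun j => resFin n hn0 j = t₀) →
        j' = k + 1 - (n:ℤ) := by
      intro j' hj'
      obtain ⟨hIcc, hres⟩ := Finset.mem_filter.mp hj'
      rw [Finset.mem_Icc] at hIcc
      have hres' : resFin n hn0 j' = resFin n hn0 (k+1) := by rw [hres, ht₀]
      have hd : (n:ℤ) ∣ (k + 1 - j') := resFin_eq_dvd n hn0 hres'
      have hle := Int.le_of_dvd (by omega) hd
      omega
    obtain ⟨j, hj⟩ := Finset.card_pos.mp hcJ1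
    have hji : j = k + 1 - (n:ℤ) := hmem_eq j hj
    have hjIcc : i ≤ j ∧ j ≤ k := Finset.mem_Icc.mp (Finset.mem_filter.mp hj).1
    have hLeq : L = (n:ℤ) := by omega
    have hcJeq : cJ t₀ = 1 := by
      have hsub : (Finset.Icc i k).filter (fun j => resFin n hn0 j = t₀) ⊆ {k + 1 - (n:ℤ)} :=
        fun a ha => Finset.mem_singleton.mpr (hmem_eq a ha)
      refine le_antisymm ?_ hcJ1
      show ((Finset.Icc i k).filter (fun j => resFin n hn0 j = t₀)).card ≤ 1
      calc ((Finset.Icc i k).filter (fun j => resFin n hn0 j = t₀)).card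
          ≤ ({k + 1 - (n:ℤ)} : Finset ℤ).card := Finset.card_le_card hsub
        _ = 1 := Finset.card_singleton _
    rw [hcJeq] at hcoeff
    have hmn : (n:ℤ) ≤ m := by
      have : m = (n:ℤ) * (cK t₀ : ℤ) := by rw [← hLeq]; omega
      have hck : (1:ℤ) ≤ (cK t₀ : ℤ) := by exact_mod_cast hcK1
      nlinarith
    omega
  · exact hlt
end

section
/- Assume condition (*). M-intervals do not overlap: if I = [i:k] and I' = [i':k'] are two M-intervals, then either I ∩ I' = ∅ or one of the intervals contains the other; in particular the configuration i < i' ≤ k < k' is impossible. -/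
/-!
Suppose `[i:k]` and `[i':k']` are M-intervals with `i < i' ≤ k < k'`, and put `m = M^r x(i)`,
`m' = M^r x(i')`. The average over a concatenation of two adjacent intervals is a strict convex
combination of the two averages. Since `[i:i'-1]` averages less than `m` by minimality of `k`, the
overlap `[i':k]` averages more than `m`, so `m' > m`; since `[i':k]` averages at most `m'`, the tail
`[k+1:k']` averages at least `m'`. Then `[i:k']`, the concatenation of `[i:k]` (average `m`) and
the tail (average `> m`), averages more than `m = M^r x(i)`, which is absurd. Two intervals that
cross in neither order are disjoint or nested.
-/

open Finset

lemma sum_Icc_eq_sum_Icc_add_sum_Icc (x : ℤ → ℝ) {a b c : ℤ} (hab : a ≤ b) (hbc : b < c) :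
    ∑ j ∈ Icc a c, x j = ∑ j ∈ Icc a b, x j + ∑ j ∈ Icc (b + 1) c, x j := by
  rw [← sum_union (disjoint_left.2 fun j hj hj' => by simp only [mem_Icc] at hj hj'; omega)]
  congr 1
  ext j
  simp only [mem_union, mem_Icc]
  omega

lemma iavg_eq_sum_div_card (x : ℤ → ℝ) {a b : ℤ} (hab : a ≤ b) :
    iavg x a b = (∑ j ∈ Icc a b, x j) / #(Icc a b) := by
  rw [iavg, Int.card_Icc, ← Int.cast_natCast, Int.toNat_of_nonneg (by omega)]
  ring_nf

lemma iavg_le_of_forall_le_s7 {x : ℤ → ℝ} {a b : ℤ} {M : ℝ} (hab : a ≤ b)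
    (hM : ∀ j ∈ Icc a b, x j ≤ M) : iavg x a b ≤ M := by
  rw [iavg_eq_sum_div_card x hab, ← expect_eq_sum_div_card]
  exact expect_le (nonempty_Icc.2 hab) hM

lemma iavg_le_Mr {x : ℤ → ℝ} (hx : BddAbove (Set.range x)) {i j : ℤ} (hij : i ≤ j) :
    iavg x i j ≤ Mr x i := by
  obtain ⟨M, hM⟩ := hx
  refine le_csSup ⟨M, ?_⟩ ⟨(j - i + 1).toNat, by omega, ?_⟩
  · rintro _ ⟨r, hr, rfl⟩
    exact iavg_le_of_forall_le_s7 (by omega) fun j _ => hM ⟨j, rfl⟩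
  · rw [Int.toNat_of_nonneg (by omega)]
    ring_nf

lemma Function.Periodic.finite_range_of_int {α : Type*} {f : ℤ → α} {c : ℤ}
    (hf : Function.Periodic f c) (hc : 0 < c) : (Set.range f).Finite := by
  refine ((Set.finite_Ico 0 c).image f).subset ?_
  rintro _ ⟨i, rfl⟩
  obtain ⟨j, hj, hij⟩ := hf.exists_mem_Ico₀ hc i
  exact ⟨j, hj, hij.symm⟩

lemma Finset.Icc_disjoint_or_subset_of_not_crossing {α : Type*} [LinearOrder α] [LocallyFiniteOrder α]
    {a b c d : α} (h₁ : ¬(a < c ∧ c ≤ b ∧ b < d)) (h₂ : ¬(c < a ∧ a ≤ d ∧ d < b)) :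
    Disjoint (Icc a b) (Icc c d) ∨ Icc a b ⊆ Icc c d ∨ Icc c d ⊆ Icc a b := by
  by_cases hdisj : b < c ∨ d < a
  · refine Or.inl (disjoint_left.2 fun t ht ht' => ?_)
    rw [mem_Icc] at ht ht'
    rcases hdisj with h | h <;> order
  · rw [not_or, not_lt, not_lt] at hdisj
    right
    rcases lt_trichotomy a c with h | rfl | h
    · exact Or.inr (Icc_subset_Icc h.le (not_lt.1 fun hbd => h₁ ⟨h, hdisj.1, hbd⟩))
    · exact (le_total b d).imp (Icc_subset_Icc le_rfl) (Icc_subset_Icc le_rfl)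
    · exact Or.inl (Icc_subset_Icc h.le (not_lt.1 fun hdb => h₂ ⟨h, hdisj.2, hdb⟩))

section Concatenation

variable (x : ℤ → ℝ) {a b c : ℤ}

lemma length_mul_iavg_concat (hab : a ≤ b) (hbc : b < c) :
    ((c - a + 1 : ℤ) : ℝ) * iavg x a c =
      ((b - a + 1 : ℤ) : ℝ) * iavg x a b + ((c - b : ℤ) : ℝ) * iavg x (b + 1) c := by
  have hlen (u v : ℤ) (huv : u ≤ v) : ((v - u + 1 : ℤ) : ℝ) ≠ 0 := by
    exact_mod_cast (by omega : v - u + 1 ≠ 0)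
  simp only [iavg]
  rw [show c - b = c - (b + 1) + 1 by ring, mul_div_cancel₀ _ (hlen a c (by omega)),
    mul_div_cancel₀ _ (hlen a b hab), mul_div_cancel₀ _ (hlen (b + 1) c hbc),
    sum_Icc_eq_sum_Icc_add_sum_Icc x hab hbc]

lemma length_mul_iavg_concat_sub_left (hab : a ≤ b) (hbc : b < c) :
    ((c - a + 1 : ℤ) : ℝ) * (iavg x a c - iavg x a b) =
      ((c - b : ℤ) : ℝ) * (iavg x (b + 1) c - iavg x a b) := by
  have h := length_mul_iavg_concat x hab hbc
  push_cast at h ⊢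
  linear_combination h

lemma length_mul_iavg_concat_sub_right (hab : a ≤ b) (hbc : b < c) :
    ((c - a + 1 : ℤ) : ℝ) * (iavg x (b + 1) c - iavg x a c) =
      ((b - a + 1 : ℤ) : ℝ) * (iavg x (b + 1) c - iavg x a b) := by
  have h := length_mul_iavg_concat x hab hbc
  push_cast at h ⊢
  linear_combination -h

variable {x}

lemma iavg_lt_iavg_concat_iff (hab : a ≤ b) (hbc : b < c) :
    iavg x a b < iavg x a c ↔ iavg x a b < iavg x (b + 1) c := by
  have hL : (0 : ℝ) < ((c - a + 1 : ℤ) : ℝ) := by exact_mod_cast (by omega : 0 < c - a + 1)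
  have hq : (0 : ℝ) < ((c - b : ℤ) : ℝ) := by exact_mod_cast (by omega : 0 < c - b)
  rw [← sub_pos, ← mul_pos_iff_of_pos_left hL, length_mul_iavg_concat_sub_left x hab hbc,
    mul_pos_iff_of_pos_left hq, sub_pos]

lemma iavg_le_iavg_concat_iff (hab : a ≤ b) (hbc : b < c) :
    iavg x a b ≤ iavg x a c ↔ iavg x a b ≤ iavg x (b + 1) c := by
  have hL : (0 : ℝ) < ((c - a + 1 : ℤ) : ℝ) := by exact_mod_cast (by omega : 0 < c - a + 1)
  have hq : (0 : ℝ) < ((c - b : ℤ) : ℝ) := by exact_mod_cast (by omega : 0 < c - b)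
  rw [← sub_nonneg, ← mul_nonneg_iff_of_pos_left hL, length_mul_iavg_concat_sub_left x hab hbc,
    mul_nonneg_iff_of_pos_left hq, sub_nonneg]

lemma iavg_concat_lt_iavg_iff (hab : a ≤ b) (hbc : b < c) :
    iavg x a c < iavg x (b + 1) c ↔ iavg x a b < iavg x (b + 1) c := by
  have hL : (0 : ℝ) < ((c - a + 1 : ℤ) : ℝ) := by exact_mod_cast (by omega : 0 < c - a + 1)
  have hp : (0 : ℝ) < ((b - a + 1 : ℤ) : ℝ) := by exact_mod_cast (by omega : 0 < b - a + 1)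
  rw [← sub_pos, ← mul_pos_iff_of_pos_left hL, length_mul_iavg_concat_sub_right x hab hbc,
    mul_pos_iff_of_pos_left hp, sub_pos]

lemma iavg_concat_le_iavg_iff (hab : a ≤ b) (hbc : b < c) :
    iavg x a c ≤ iavg x (b + 1) c ↔ iavg x a b ≤ iavg x (b + 1) c := by
  have hL : (0 : ℝ) < ((c - a + 1 : ℤ) : ℝ) := by exact_mod_cast (by omega : 0 < c - a + 1)
  have hp : (0 : ℝ) < ((b - a + 1 : ℤ) : ℝ) := by exact_mod_cast (by omega : 0 < b - a + 1)
  rw [← sub_nonneg, ← mul_nonneg_iff_of_pos_left hL, length_mul_iavg_concat_sub_right x hab hbc,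
    mul_nonneg_iff_of_pos_left hp, sub_nonneg]

end Concatenation

lemma IsMInt.not_crossing {n : ℕ} {x : ℤ → ℝ} (hx : BddAbove (Set.range x)) {i k i' k' : ℤ}
    (hI : IsMInt n x i k) (hI' : IsMaxInt n x i' k') : ¬(i < i' ∧ i' ≤ k ∧ k < k') := by
  obtain ⟨j, rfl⟩ : ∃ j, i' = j + 1 := ⟨i' - 1, by ring⟩
  rintro ⟨hij, hjk, hkk'⟩
  obtain ⟨⟨-, -, hik⟩, hfirst⟩ := hI
  obtain ⟨-, -, hjk'⟩ := hI'
  have hhead : iavg x i j < iavg x i k :=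
    hik ▸ (iavg_le_Mr hx (by omega)).lt_of_ne (hfirst j (by omega) (by omega))
  have hmiddle : iavg x i k < iavg x (j + 1) k :=
    (iavg_concat_lt_iavg_iff (by omega) (by omega)).2
      ((iavg_lt_iavg_concat_iff (by omega) (by omega)).1 hhead)
  have hoverlap : iavg x (j + 1) k ≤ iavg x (j + 1) k' := hjk' ▸ iavg_le_Mr hx hjk
  have htail : iavg x (j + 1) k' ≤ iavg x (k + 1) k' :=
    (iavg_concat_le_iavg_iff hjk hkk').2 ((iavg_le_iavg_concat_iff hjk hkk').1 hoverlap)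
  have hlong : iavg x i k < iavg x i k' :=
    (iavg_lt_iavg_concat_iff (by omega) hkk').2 (hmiddle.trans_le (hoverlap.trans htail))
  exact (hik ▸ hlong).not_ge (iavg_le_Mr hx (by omega))

theorem MInt_nonoverlap_general (n : ℕ) (x : ℤ → ℝ)
    (hper : ∀ i, x (i + (n : ℤ)) = x i) (i k i' k' : ℤ)
    (hI : IsMInt n x i k) (hI' : IsMInt n x i' k') :
    (Disjoint (Finset.Icc i k) (Finset.Icc i' k') ∨
      Finset.Icc i k ⊆ Finset.Icc i' k' ∨ Finset.Icc i' k' ⊆ Finset.Icc i k) ∧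
    ¬(i < i' ∧ i' ≤ k ∧ k < k') := by
  have hn : 0 < (n : ℤ) := by linarith [hI.1.1, hI.1.2.1]
  have hx : BddAbove (Set.range x) := (Function.Periodic.finite_range_of_int hper hn).bddAbove
  have hcross := hI.not_crossing hx hI'.1
  exact ⟨Icc_disjoint_or_subset_of_not_crossing hcross (hI'.not_crossing hx hI.1), hcross⟩

/-- `M`-intervals do not overlap: two `M`-intervals are either disjoint or one
contains the other; in particular `i < i' ≤ k < k'` is impossible. -/
theorem MInt_nonoverlap (n : ℕ) (hn : 1 ≤ n) (x : ℤ → ℝ)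
    (hpos : ∀ i, 0 ≤ x i) (hper : ∀ i, x (i + (n : ℤ)) = x i)
    (hstar : StarCond n x) (i k i' k' : ℤ)
    (hI : IsMInt n x i k) (hI' : IsMInt n x i' k') :
    (Disjoint (Finset.Icc i k) (Finset.Icc i' k') ∨
      Finset.Icc i k ⊆ Finset.Icc i' k' ∨ Finset.Icc i' k' ⊆ Finset.Icc i k) ∧
    ¬(i < i' ∧ i' ≤ k ∧ k < k') :=
  MInt_nonoverlap_general n x hper i k i' k' hI hI'
end

section
/- Assume condition (*). There exists a unique index i* ∈ [1:n] such that [i* : i*+n−1] is a full maximal interval; i.e., a full maximal interval exists and is unique modulo shifts by multiples of n. -/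
open Finset

private lemma myIocDisj (a b c : ℤ) : Disjoint (Finset.Ioc a b) (Finset.Ioc b c) := by
  rw [Finset.disjoint_left]; intro j hj hj'
  simp only [Finset.mem_Ioc] at *; omega

private lemma mySumIoc (f : ℤ → ℝ) (a b c : ℤ) (hab : a ≤ b) (hbc : b ≤ c) :
    ∑ k ∈ Finset.Ioc a b, f k + ∑ k ∈ Finset.Ioc b c, f k = ∑ k ∈ Finset.Ioc a c, f k := by
  rw [← Finset.sum_union (myIocDisj a b c), Finset.Ioc_union_Ioc_eq_Ioc hab hbc]

private lemma mySumTop (f : ℤ → ℝ) (a b : ℤ) (h : a ≤ b) :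
    ∑ k ∈ Finset.Ioc a (b+1), f k = ∑ k ∈ Finset.Ioc a b, f k + f (b+1) := by
  rw [← mySumIoc f a b (b+1) h (by omega)]
  rw [show Finset.Ioc b (b+1) = {b+1} by ext j; simp only [Finset.mem_Ioc, Finset.mem_singleton]; omega,
    Finset.sum_singleton]

/-- Partial sums `P k = x_1 + ⋯ + x_k`. -/
private noncomputable def psum (x : ℤ → ℝ) (k : ℤ) : ℝ := ∑ j ∈ Finset.Ioc (0:ℤ) k, x j

private lemma psum_split (x : ℤ → ℝ) {a b : ℤ} (h0 : 0 ≤ a) (hab : a ≤ b) :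
    psum x a + ∑ j ∈ Finset.Ioc a b, x j = psum x b :=
  mySumIoc x 0 a b h0 hab

private lemma psum_per (x : ℤ → ℝ) (n : ℕ) (hper : ∀ i, x (i + (n : ℤ)) = x i) :
    ∀ m : ℤ, 0 ≤ m → psum x (m + (n:ℤ)) = psum x m + psum x (n:ℤ) := by
  refine Int.le_induction ?_ ?_
  · simp [psum]
  · intro m hm ih
    have e1 : psum x (m + 1 + (n:ℤ)) = psum x (m + (n:ℤ)) + x (m + 1) := by
      rw [show m + 1 + (n:ℤ) = (m + (n:ℤ)) + 1 by ring]
      rw [psum, psum, mySumTop x 0 (m + (n:ℤ)) (by omega)]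
      rw [show m + (n:ℤ) + 1 = (m + 1) + (n:ℤ) by ring, hper (m+1)]
    have e2 : psum x (m + 1) = psum x m + x (m + 1) := by
      rw [psum, psum, mySumTop x 0 m (by omega)]
    rw [e1, ih, e2]; ring

private lemma finsum_conv (n : ℕ) (f : ℤ → ℝ) :
    ∑ i : Fin n, f ((i : ℤ) + 1) = ∑ j ∈ Finset.Ioc (0:ℤ) (n:ℤ), f j := by
  rw [Fin.sum_univ_eq_sum_range (fun i : ℕ => f ((i:ℤ)+1)) n]
  apply Finset.sum_nbij' (fun i : ℕ => (i:ℤ)+1) (fun j : ℤ => (j-1).toNat)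
  · intro a ha; simp only [Finset.mem_range] at ha; simp only [Finset.mem_Ioc]; omega
  · intro a ha; simp only [Finset.mem_Ioc] at ha; simp only [Finset.mem_range]; omega
  · intro a _; omega
  · intro a ha; simp only [Finset.mem_Ioc] at ha; omega
  · intro a _; rfl

/-- There exists a unique `i* ∈ [1:n]` such that `[i* : i*+n−1]` is a full
maximal interval. -/
theorem full_maximal_interval_exists_unique (n : ℕ) (hn : 1 ≤ n) (x : ℤ → ℝ)
    (hpos : ∀ i, 0 ≤ x i) (hper : ∀ i, x (i + (n : ℤ)) = x i)
    (hstar : StarCond n x) :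
    ∃! i : ℤ, i ∈ Finset.Icc (1 : ℤ) (n : ℤ) ∧
      iavg x i (i + (n : ℤ) - 1) = Mr x i := by
  have hn0 : (0:ℤ) < (n:ℤ) := by exact_mod_cast hn
  have hnR : (0:ℝ) < (n:ℝ) := by exact_mod_cast hn
  set A : ℝ := psum x (n:ℤ) / (n:ℝ) with hAdef
  have hPnA : psum x (n:ℤ) = (n:ℝ) * A := by rw [hAdef]; field_simp
  set F : ℤ → ℝ := fun k => psum x k - (k:ℝ) * A with hFdef
  -- periodicity of F
  have hFper : ∀ m : ℤ, 0 ≤ m → F (m + (n:ℤ)) = F m := by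
    intro m hm
    simp only [hFdef]
    rw [psum_per x n hper m hm, hPnA]
    push_cast; ring
  have hFq : ∀ q : ℕ, ∀ t : ℤ, 0 ≤ t → F (t + (q:ℤ) * (n:ℤ)) = F t := by
    intro q
    induction q with
    | zero => intro t ht; simp
    | succ q ih =>
      intro t ht
      rw [show t + ((q:ℕ)+1 : ℕ) * (n:ℤ) = (t + (q:ℤ) * (n:ℤ)) + (n:ℤ) by push_cast; ring]
      rw [hFper (t + (q:ℤ)*(n:ℤ)) (by positivity), ih t ht]
  have hFmod : ∀ m : ℤ, 0 ≤ m → F m = F (m % (n:ℤ)) := by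
    intro m hm
    have h1 : m % (n:ℤ) + ((m / (n:ℤ)).toNat : ℤ) * (n:ℤ) = m := by
      rw [Int.toNat_of_nonneg (Int.ediv_nonneg hm (by omega))]
      have h3 := Int.mul_ediv_add_emod m (n:ℤ)
      linarith
    conv_lhs => rw [← h1]
    exact hFq _ _ (Int.emod_nonneg m (by omega))
  have hFbound : ∀ B : ℝ, (∀ t ∈ Finset.Icc (0:ℤ) ((n:ℤ)-1), F t ≤ B) →
      ∀ m : ℤ, 0 ≤ m → F m ≤ B := by
    intro B hB m hm
    rw [hFmod m hm]
    exact hB _ (by rw [Finset.mem_Icc]; constructor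
                   · exact Int.emod_nonneg m (by omega)
                   · have := Int.emod_lt_of_pos m hn0; omega)
  -- value of averages
  have hval : ∀ i : ℤ, 1 ≤ i → ∀ r : ℕ, 1 ≤ r →
      iavg x i (i + (r:ℤ) - 1) = (psum x (i - 1 + (r:ℤ)) - psum x (i-1)) / (r:ℝ) := by
    intro i hi r hr
    have hIcc : Finset.Icc i (i + (r:ℤ) - 1) = Finset.Ioc (i-1) (i-1+(r:ℤ)) := by
      ext j; simp only [Finset.mem_Icc, Finset.mem_Ioc]; omega
    have hsum : psum x (i-1) + ∑ j ∈ Finset.Ioc (i-1) (i-1+(r:ℤ)), x j = psum x (i-1+(r:ℤ)) :=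
      psum_split x (by omega) (by omega)
    rw [iavg, hIcc, show (i + (r:ℤ) - 1 - i + 1 : ℤ) = (r:ℤ) by ring,
      show (∑ j ∈ Finset.Ioc (i-1) (i-1+(r:ℤ)), x j) = psum x (i-1+(r:ℤ)) - psum x (i-1) by linarith]
    norm_num
  have hFsub : ∀ i : ℤ, ∀ r : ℕ,
      psum x (i-1+(r:ℤ)) - psum x (i-1) = F (i-1+(r:ℤ)) - F (i-1) + (r:ℝ) * A := by
    intro i r; simp only [hFdef]; push_cast; ring
  have hdivle : ∀ i : ℤ, 1 ≤ i → ∀ r : ℕ, 1 ≤ r →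
      (iavg x i (i + (r:ℤ) - 1) ≤ A ↔ F (i-1+(r:ℤ)) ≤ F (i-1)) := by
    intro i hi r hr
    have hrR : (0:ℝ) < (r:ℝ) := by exact_mod_cast hr
    rw [hval i hi r hr, div_le_iff₀ hrR, hFsub i r]
    constructor <;> intro h <;> nlinarith
  have hfull : ∀ i : ℤ, 1 ≤ i → iavg x i (i + (n:ℤ) - 1) = A := by
    intro i hi
    rw [hval i hi n hn, psum_per x n hper (i-1) (by omega)]
    rw [hAdef]; ring
  -- key equivalence
  have key : ∀ i : ℤ, 1 ≤ i → i ≤ (n:ℤ) →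
      ((iavg x i (i + (n:ℤ) - 1) = Mr x i) ↔
        ∀ t ∈ Finset.Icc (0:ℤ) ((n:ℤ)-1), F t ≤ F (i-1)) := by
    intro i hi hin
    constructor
    · intro h
      -- bounded above
      have hne : (Finset.Icc (0:ℤ) ((n:ℤ)-1)).Nonempty := ⟨0, by rw [Finset.mem_Icc]; omega⟩
      set Bmax : ℝ := ((Finset.Icc (0:ℤ) ((n:ℤ)-1)).image F).max' (hne.image F) with hBdef
      have hBle : ∀ t ∈ Finset.Icc (0:ℤ) ((n:ℤ)-1), F t ≤ Bmax := by
        intro t ht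
        exact Finset.le_max' _ _ (Finset.mem_image_of_mem F ht)
      have hFle : ∀ m : ℤ, 0 ≤ m → F m ≤ Bmax := hFbound Bmax hBle
      set M : ℝ := max (Bmax - F (i-1)) 0 with hMdef
      have hM0 : (0:ℝ) ≤ M := le_max_right _ _
      have hM1 : Bmax - F (i-1) ≤ M := le_max_left _ _
      have hbdd : BddAbove {a : ℝ | ∃ r : ℕ, 1 ≤ r ∧ a = iavg x i (i + (r:ℤ) - 1)} := by
        refine ⟨A + M, ?_⟩
        rintro a ⟨r, hr, rfl⟩
        have hrR : (0:ℝ) < (r:ℝ) := by exact_mod_cast hr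
        have hr1 : (1:ℝ) ≤ (r:ℝ) := by exact_mod_cast hr
        rw [hval i hi r hr, div_le_iff₀ hrR, hFsub i r]
        have h1 : F (i-1+(r:ℤ)) ≤ Bmax := hFle _ (by omega)
        nlinarith
      have hMrA : Mr x i = A := by rw [← h, hfull i hi]
      intro t ht
      rw [Finset.mem_Icc] at ht
      rcases le_or_gt i t with hit | hit
      · set r : ℕ := (t - i + 1).toNat with hrdef
        have hrz : (r:ℤ) = t - i + 1 := by rw [hrdef]; omega
        have hr1 : 1 ≤ r := by omega
        have hmem : iavg x i (i + (r:ℤ) - 1) ∈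
            {a : ℝ | ∃ r : ℕ, 1 ≤ r ∧ a = iavg x i (i + (r:ℤ) - 1)} := ⟨r, hr1, rfl⟩
        have hle : iavg x i (i + (r:ℤ) - 1) ≤ A := by
          rw [← hMrA]; exact le_csSup hbdd hmem
        have := (hdivle i hi r hr1).mp hle
        rwa [show i - 1 + (r:ℤ) = t by omega] at this
      · set r : ℕ := (t - i + 1 + (n:ℤ)).toNat with hrdef
        have hrz : (r:ℤ) = t - i + 1 + (n:ℤ) := by rw [hrdef]; omega
        have hr1 : 1 ≤ r := by omega
        have hmem : iavg x i (i + (r:ℤ) - 1) ∈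
            {a : ℝ | ∃ r : ℕ, 1 ≤ r ∧ a = iavg x i (i + (r:ℤ) - 1)} := ⟨r, hr1, rfl⟩
        have hle : iavg x i (i + (r:ℤ) - 1) ≤ A := by
          rw [← hMrA]; exact le_csSup hbdd hmem
        have h2 := (hdivle i hi r hr1).mp hle
        rw [show i - 1 + (r:ℤ) = t + (n:ℤ) by omega, hFper t ht.1] at h2
        exact h2
    · intro h
      rw [hfull i hi]
      symm
      apply IsGreatest.csSup_eq
      constructor
      · exact ⟨n, hn, (hfull i hi).symm⟩
      · rintro a ⟨r, hr, rfl⟩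
        apply (hdivle i hi r hr).mpr
        exact hFbound (F (i-1)) h (i-1+(r:ℤ)) (by omega)
  -- injectivity of F on [0, n-1] from condition (*)
  have hinj : ∀ s t : ℤ, 0 ≤ s → s < t → t ≤ (n:ℤ) - 1 → F s ≠ F t := by
    intro s t hs hst htn heq
    have hPts : psum x t - psum x s = ((t - s : ℤ):ℝ) * A := by
      simp only [hFdef] at heq
      push_cast at heq ⊢
      linarith
    have hsub : psum x s + ∑ j ∈ Finset.Ioc s t, x j = psum x t :=
      psum_split x hs (by omega)
    have hrel : (n:ℝ) * (∑ j ∈ Finset.Ioc s t, x j) = ((t-s:ℤ):ℝ) * (psum x (n:ℤ)) := by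
      have h1 : (∑ j ∈ Finset.Ioc s t, x j) = ((t-s:ℤ):ℝ) * A := by linarith
      rw [h1, hAdef]; field_simp
    unfold StarCond at hstar
    rw [Fintype.linearIndependent_iff] at hstar
    set g : Fin n → ℚ := fun i => (if ((i:ℤ)+1) ∈ Finset.Ioc s t then (n:ℚ) else 0)
        - ((t - s : ℤ) : ℚ) with hgdef
    have hgsum : ∑ i : Fin n, g i • x ((i:ℤ)+1) = 0 := by
      have expand : ∀ i : Fin n, g i • x ((i:ℤ)+1)
          = (if ((i:ℤ)+1) ∈ Finset.Ioc s t then (n:ℝ) * x ((i:ℤ)+1) else 0)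
            - ((t-s:ℤ):ℝ) * x ((i:ℤ)+1) := by
        intro i
        rw [Rat.smul_def]
        simp only [hgdef]
        split_ifs <;> push_cast <;> try ring
      rw [Finset.sum_congr rfl (fun i _ => expand i), Finset.sum_sub_distrib]
      rw [finsum_conv n (fun j => if j ∈ Finset.Ioc s t then (n:ℝ) * x j else 0)]
      rw [finsum_conv n (fun j => ((t-s:ℤ):ℝ) * x j)]
      rw [Finset.sum_ite_mem, Finset.inter_eq_right.mpr
        (Finset.Ioc_subset_Ioc (by omega) (by omega))]
      rw [← Finset.mul_sum, ← Finset.mul_sum]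
      have hpn : psum x (n:ℤ) = ∑ j ∈ Finset.Ioc (0:ℤ) (n:ℤ), x j := rfl
      rw [← hpn]
      rw [hrel, sub_self]
    have h0 := hstar g hgsum ⟨0, hn⟩
    simp only [hgdef] at h0
    have hc0 : (((⟨0, hn⟩ : Fin n) : ℤ) + 1) = 1 := by simp
    rw [hc0] at h0
    split_ifs at h0 with hmem
    · have : ((n:ℤ):ℚ) = ((t - s : ℤ):ℚ) := by push_cast at h0 ⊢; linarith
      have : (n:ℤ) = t - s := by exact_mod_cast this
      omega
    · have : ((t - s : ℤ):ℚ) = 0 := by linarith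
      have : (t - s : ℤ) = 0 := by exact_mod_cast this
      omega
  -- assembly
  obtain ⟨b, hb, hbmax⟩ := Finset.exists_max_image (Finset.Icc (0:ℤ) ((n:ℤ)-1)) F
    ⟨0, by rw [Finset.mem_Icc]; omega⟩
  rw [Finset.mem_Icc] at hb
  refine ⟨b+1, ⟨by rw [Finset.mem_Icc]; omega, ?_⟩, ?_⟩
  · apply (key (b+1) (by omega) (by omega)).mpr
    intro t ht
    have := hbmax t ht
    rwa [show b + 1 - 1 = b by ring]
  · rintro j ⟨hj, hjfull⟩
    rw [Finset.mem_Icc] at hj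
    have hmax_j := (key j hj.1 hj.2).mp hjfull
    have h1 : F (j-1) ≤ F b := hbmax (j-1) (by rw [Finset.mem_Icc]; omega)
    have h2 : F b ≤ F (j-1) := hmax_j b (by rw [Finset.mem_Icc]; omega)
    have heq : F (j-1) = F b := le_antisymm h1 h2
    rcases lt_trichotomy (j-1) b with h|h|h
    · exact absurd heq (hinj (j-1) b (by omega) h (by omega))
    · omega
    · exact absurd heq.symm (hinj b (j-1) (by omega) h (by omega))
end

section
/- Assume condition (*), and let I = [i* : i*+n−1] be the full maximal interval. Then ā(x) = a_I(x) < a_J(x) for every M-interval J of length < n. -/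
open Finset

/-! Every window of `n` consecutive terms sums to the same value, so `M^r x(i) ≥ ā(x)` for all `i`,
and a maximal interval `J` has `a_J(x) = M^r x(j) ≥ ā(x)`. Reduced mod `n`, a window `J` of length
`ℓ < n` is a proper nonempty subset `T` of one period, so `a_J(x) = ā(x)` would be the nontrivial
rational relation `n ∑_{i ∈ T} x_i = ℓ ∑_i x_i`, which (*) forbids. -/

theorem LinearIndependent.avg_ne_avg_univ {ι : Type*} [Fintype ι] {v : ι → ℝ}
    (hv : LinearIndependent ℚ v) {T : Finset ι} (hT : T.Nonempty) (hTu : T ≠ univ) :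
    (∑ i ∈ T, v i) / #T ≠ (∑ i, v i) / Fintype.card ι := by
  classical
  obtain ⟨i, hi⟩ := hT
  intro h
  have hcross : (Fintype.card ι : ℝ) * ∑ i ∈ T, v i = #T * ∑ i, v i := by
    have hT0 : (#T : ℝ) ≠ 0 := by exact_mod_cast (card_pos.2 ⟨i, hi⟩).ne'
    have hι0 : (Fintype.card ι : ℝ) ≠ 0 := by exact_mod_cast (Fintype.card_pos_iff.2 ⟨i⟩).ne'
    rw [div_eq_div_iff hT0 hι0] at h
    linarith
  set g : ι → ℚ := fun i => (if i ∈ T then (Fintype.card ι : ℚ) else 0) - #T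
  have hg : ∑ i, g i • v i = 0 := by
    simp [g, Rat.smul_def, sub_mul, sum_sub_distrib, apply_ite (Rat.cast : ℚ → ℝ), ite_mul,
      ← mul_sum, hcross]
  have hgi := Fintype.linearIndependent_iff.mp hv g hg i
  simp only [g, hi, if_true, sub_eq_zero, Nat.cast_inj] at hgi
  exact hTu ((card_eq_iff_eq_univ T).mp hgi.symm)

section Residue

variable {n : ℕ} [NeZero n]

/-- The index `i : Fin n` with `i + 1 ≡ m [ZMOD n]`, matching the family `x (i + 1)` of
`StarCond`. -/
def residue (n : ℕ) [NeZero n] (m : ℤ) : Fin n :=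
  ⟨((m - 1) % n).toNat, by
    have hn := NeZero.pos n
    have := Int.emod_lt_of_pos (m - 1) (Int.natCast_pos.2 hn)
    omega⟩

theorem coe_residue (m : ℤ) : ((residue n m : ℕ) : ℤ) = (m - 1) % n :=
  Int.toNat_of_nonneg (Int.emod_nonneg _ (Int.natCast_ne_zero.2 (NeZero.ne n)))

theorem Function.Periodic.apply_residue_add_one {α : Type*} {x : ℤ → α}
    (hx : Function.Periodic x n) (m : ℤ) : x ((residue n m : ℕ) + 1) = x m := by
  rw [coe_residue, Int.emod_def, show m - 1 - n * ((m - 1) / n) + 1 = m - (m - 1) / n * n by ring]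
  exact hx.sub_int_mul_eq _

theorem residue_injOn {j k : ℤ} (h : k - j < n) : Set.InjOn (residue n) (Set.Icc j k) := by
  intro a ha b hb hab
  have hmod : (a - 1) % n = (b - 1) % n := by
    simpa only [coe_residue] using congrArg (fun i : Fin n => ((i : ℕ) : ℤ)) hab
  have hdvd : (n : ℤ) ∣ b - a := by simpa using Int.ModEq.dvd hmod
  have hlt : |b - a| < n := abs_sub_lt_iff.2 ⟨by linarith [ha.1, hb.2], by linarith [ha.2, hb.1]⟩
  linarith [Int.eq_zero_of_abs_lt_dvd hdvd hlt]

end Residue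

theorem Int.cast_card_Icc {a b : ℤ} (hab : a ≤ b) : (#(Icc a b) : ℝ) = ((b - a + 1 : ℤ) : ℝ) := by
  rw [Int.card_Icc, ← Int.cast_natCast, Int.toNat_of_nonneg (by omega), add_sub_right_comm]

section Window

variable {n : ℕ} [NeZero n] {x : ℤ → ℝ}

theorem card_image_residue_Icc {j k : ℤ} (h : k - j < n) :
    #((Icc j k).image (residue n)) = #(Icc j k) :=
  card_image_of_injOn (by simpa using residue_injOn h)

theorem image_residue_Icc_period (j : ℤ) : (Icc j (j + n - 1)).image (residue n) = univ :=
  eq_univ_of_card _ <| by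
    rw [card_image_residue_Icc (by omega : j + n - 1 - j < n), Fintype.card_fin, Int.card_Icc]
    omega

theorem Function.Periodic.iavg_eq_avg_image_residue (hx : Function.Periodic x n) {j k : ℤ}
    (hjk : j ≤ k) (h : k - j < n) :
    iavg x j k = (∑ i ∈ (Icc j k).image (residue n), x ((i : ℕ) + 1)) /
      #((Icc j k).image (residue n)) := by
  rw [iavg, sum_image fun a ha b hb => residue_injOn h (by simpa using ha) (by simpa using hb),
    card_image_residue_Icc h, Int.cast_card_Icc hjk,
    sum_congr rfl fun m _ => hx.apply_residue_add_one m]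

theorem Function.Periodic.iavg_period (hx : Function.Periodic x n) (j : ℤ) :
    iavg x j (j + n - 1) = (∑ i : Fin n, x ((i : ℕ) + 1)) / n := by
  have := NeZero.pos n
  rw [hx.iavg_eq_avg_image_residue (by omega) (by omega), image_residue_Icc_period, card_univ,
    Fintype.card_fin]

theorem iavg_le_of_forall_le_s10 {B : ℝ} (hB : ∀ m, x m ≤ B) {a b : ℤ} (hab : a ≤ b) :
    iavg x a b ≤ B := by
  rw [iavg, ← Int.cast_card_Icc hab, div_le_iff₀ (by simpa using hab), ← nsmul_eq_mul']
  exact sum_le_card_nsmul _ _ _ fun m _ => hB m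

theorem Function.Periodic.bddAbove_iavg (hx : Function.Periodic x n) (i : ℤ) :
    BddAbove {a : ℝ | ∃ r : ℕ, 1 ≤ r ∧ a = iavg x i (i + (r : ℤ) - 1)} := by
  refine ⟨univ.sup' univ_nonempty fun i : Fin n => x ((i : ℕ) + 1), ?_⟩
  rintro a ⟨r, hr, rfl⟩
  refine iavg_le_of_forall_le_s10 (fun m => ?_) (by omega)
  rw [← hx.apply_residue_add_one m]
  exact le_sup' (fun i : Fin n => x ((i : ℕ) + 1)) (mem_univ _)

theorem iavg_le_Mr_s10 {i : ℤ}
    (hbdd : BddAbove {a : ℝ | ∃ r : ℕ, 1 ≤ r ∧ a = iavg x i (i + (r : ℤ) - 1)})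
    {r : ℕ} (hr : 1 ≤ r) : iavg x i (i + r - 1) ≤ Mr x i :=
  le_csSup hbdd ⟨r, hr, rfl⟩

theorem StarCond.iavg_ne (hstar : StarCond n x) (hx : Function.Periodic x n) {j k : ℤ}
    (hjk : j ≤ k) (hlen : k - j + 1 < n) : iavg x j k ≠ (∑ i : Fin n, x ((i : ℕ) + 1)) / n := by
  have hcard : #((Icc j k).image (residue n)) ≠ n := by
    rw [card_image_residue_Icc (by omega), Int.card_Icc]
    omega
  have := LinearIndependent.avg_ne_avg_univ hstar ((nonempty_Icc.2 hjk).image (residue n))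
    fun hT => hcard (by rw [hT, card_univ, Fintype.card_fin])
  rwa [Fintype.card_fin, ← hx.iavg_eq_avg_image_residue hjk (by omega)] at this

end Window

theorem full_maximal_interval_least_avg_general (n : ℕ) (hn : 1 ≤ n) (x : ℤ → ℝ)
    (hper : ∀ i, x (i + (n : ℤ)) = x i)
    (hstar : StarCond n x) (istar : ℤ) :
    iavg x 1 (n : ℤ) = iavg x istar (istar + (n : ℤ) - 1) ∧
    ∀ j k : ℤ, IsMInt n x j k → k - j + 1 < (n : ℤ) →
      iavg x 1 (n : ℤ) < iavg x j k := by
  have : NeZero n := ⟨by omega⟩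
  have hx : Function.Periodic x n := hper
  have hbar : iavg x 1 n = (∑ i : Fin n, x ((i : ℕ) + 1)) / n := by
    simpa using hx.iavg_period 1
  refine ⟨by rw [hbar, hx.iavg_period], ?_⟩
  rintro j k ⟨⟨hjk, -, hmax⟩, -⟩ hlen
  refine lt_of_le_of_ne ?_ (hbar ▸ hstar.iavg_ne hx hjk hlen).symm
  rw [hmax, hbar, ← hx.iavg_period j]
  exact iavg_le_Mr_s10 (hx.bddAbove_iavg j) hn

/-- If `I = [i* : i*+n−1]` is the full maximal interval, then
`ā(x) = a_I(x) < a_J(x)` for every `M`-interval `J` of length `< n`. -/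
theorem full_maximal_interval_least_avg (n : ℕ) (hn : 1 ≤ n) (x : ℤ → ℝ)
    (hpos : ∀ i, 0 ≤ x i) (hper : ∀ i, x (i + (n : ℤ)) = x i)
    (hstar : StarCond n x) (istar : ℤ)
    (hfull : iavg x istar (istar + (n : ℤ) - 1) = Mr x istar) :
    iavg x 1 (n : ℤ) = iavg x istar (istar + (n : ℤ) - 1) ∧
    ∀ j k : ℤ, IsMInt n x j k → k - j + 1 < (n : ℤ) →
      iavg x 1 (n : ℤ) < iavg x j k :=
  full_maximal_interval_least_avg_general n hn x hper hstar istar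
end

section
/- Assume condition (*) and write A = ā(x). Among the n cyclic shifts of x there is exactly one index i* ∈ [1:n] such that Σ_{j=0}^{k−1} x_{i*+j} < A·k for all k = 1,…,n−1 (with equality Σ_{j=0}^{n−1} x_{i*+j} = A·n at k = n); i.e., exactly one cyclic shift (x_{i*}, x_{i*+1},…, x_{i*+n−1}) majorizes the constant tuple (A,…,A). -/
open Finset

/-!
Let `A` be the mean and `P m = Σ_{j<m} (x_{j+1} - A)`. A full period sums to `n A`, so `P` is
`n`-periodic, and the window of length `k` starting at `i = r + 1` sums to
`P (r + k) - P r + A k`. Hence `i` is majorizing iff `r` is a strict maximum of `P` on `[0, n)`.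
Such a maximum exists and is unique because `P` is injective on `[0, n)`: `P a = P b` with
`a < b < n` would be the nontrivial rational relation `n Σ_{a ≤ j < b} x_{j+1} = (b - a) Σ_j x_j`.
-/

open Function

theorem Int.sum_Icc_one_eq_sum_range {M : Type*} [AddCommMonoid M] (f : ℤ → M) (n : ℕ) :
    ∑ j ∈ Icc (1 : ℤ) n, f j = ∑ j ∈ Finset.range n, f (1 + j) := by
  rw [Int.Icc_eq_finset_map, sum_map]
  simp

theorem Function.Periodic.sum_range_comp_add {M : Type*} [AddCancelCommMonoid M] {f : ℤ → M}
    {n : ℕ} (hf : Periodic f n) (a : ℤ) :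
    ∑ j ∈ range n, f (a + j) = ∑ j ∈ range n, f j := by
  have shift (a : ℤ) : ∑ j ∈ range n, f (a + 1 + j) = ∑ j ∈ range n, f (a + j) := by
    refine add_right_cancel (b := f a) ?_
    calc ∑ j ∈ range n, f (a + 1 + j) + f a = ∑ j ∈ range (n + 1), f (a + j) := by
          rw [sum_range_succ']; push_cast; simp [add_assoc, add_comm (1 : ℤ)]
      _ = ∑ j ∈ range n, f (a + j) + f a := by rw [sum_range_succ, hf]
  induction a using Int.induction_on with
  | zero => simp
  | succ a ih => rw [shift, ih]
  | pred a ih => rw [← ih, ← shift, sub_add_cancel]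

theorem LinearIndependent.card_smul_sum_ne {ι R M : Type*} [Fintype ι] [Semiring R] [CharZero R]
    [AddCommMonoid M] [Module R M] {v : ι → M} (hv : LinearIndependent R v) {s : Finset ι}
    (hs : s.Nonempty) (hsu : s ≠ univ) :
    (Fintype.card ι : R) • ∑ i ∈ s, v i ≠ (#s : R) • ∑ i, v i := by
  classical
  intro h
  obtain ⟨i, hi⟩ : ∃ i, i ∉ s := by simpa [eq_univ_iff_forall] using hsu
  have := Fintype.linearIndependent_iffₛ.1 hv (fun j => if j ∈ s then (Fintype.card ι : R) else 0)
    (fun _ => (#s : R)) (by simpa [ite_smul, smul_sum, sum_ite_mem] using h) i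
  simp only [hi, if_false] at this
  exact hs.card_ne_zero (by exact_mod_cast this.symm)

section StrictMax

variable {α : Type*} [LinearOrder α] {f : ℕ → α} {n : ℕ}

theorem Set.InjOn.existsUnique_forall_lt (hf : Set.InjOn f (Set.Iio n)) (hn : 1 ≤ n) :
    ∃! r, r < n ∧ ∀ s < n, s ≠ r → f s < f r := by
  obtain ⟨r, hr, hmax⟩ :=
    Finset.exists_max_image (Finset.range n) f (nonempty_range_iff.2 (by omega))
  rw [Finset.mem_range] at hr
  have hstrict : ∀ s < n, s ≠ r → f s < f r := fun s hs hsr =>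
    (hmax s (Finset.mem_range.2 hs)).lt_of_ne fun h => hsr (hf hs hr h)
  refine ⟨r, ⟨hr, hstrict⟩, fun r' ⟨hr', hstrict'⟩ => ?_⟩
  by_contra hne
  exact (hstrict r' hr' hne).asymm (hstrict' r hr (Ne.symm hne))

theorem Function.Periodic.forall_add_lt_iff (hf : Periodic f n) {r : ℕ} (hr : r < n) :
    (∀ k, 1 ≤ k → k < n → f (r + k) < f r) ↔ ∀ s < n, s ≠ r → f s < f r := by
  constructor
  · intro h s hs hsr
    rcases Nat.lt_or_gt_of_ne hsr with hlt | hgt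
    · have := h (s + n - r) (by omega) (by omega)
      rwa [show r + (s + n - r) = s + n by omega, hf] at this
    · have := h (s - r) (by omega) (by omega)
      rwa [show r + (s - r) = s by omega] at this
  · intro h k hk hkn
    by_cases hrk : r + k < n
    · exact h _ hrk (by omega)
    · rw [show r + k = (r + k - n) + n by omega, hf]
      exact h _ (by omega) (by omega)

theorem Function.Periodic.existsUnique_forall_add_lt (hf : Periodic f n)
    (hinj : Set.InjOn f (Set.Iio n)) (hn : 1 ≤ n) :
    ∃! r, r < n ∧ ∀ k, 1 ≤ k → k < n → f (r + k) < f r :=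
  (existsUnique_congr fun _ => and_congr_right hf.forall_add_lt_iff).2
    (hinj.existsUnique_forall_lt hn)

end StrictMax

noncomputable def excessSum (x : ℤ → ℝ) (A : ℝ) (m : ℕ) : ℝ :=
  ∑ j ∈ range m, (x (1 + j) - A)

section ExcessSum

variable {x : ℤ → ℝ} {A : ℝ} {n : ℕ}

theorem excessSum_add_sub (r k : ℕ) :
    excessSum x A (r + k) - excessSum x A r = ∑ j ∈ range k, x (1 + r + j) - A * k := by
  rw [excessSum, excessSum, sum_range_add, add_sub_cancel_left, sum_sub_distrib, sum_const,
    card_range, nsmul_eq_mul, mul_comm]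
  congr 1
  refine sum_congr rfl fun j _ => ?_
  rw [Nat.cast_add, add_assoc]

theorem periodic_excessSum (hper : Periodic x n) (hmean : ∑ j ∈ range n, x (1 + j) = A * n) :
    Periodic (excessSum x A) n := fun m => by
  have := excessSum_add_sub (x := x) (A := A) m n
  rwa [hper.sum_range_comp_add, ← hper.sum_range_comp_add 1, hmean, sub_self, sub_eq_zero] at this

theorem excessSum_ne_of_lt (hstar : StarCond n x) (hmean : ∑ j ∈ range n, x (1 + j) = A * n)
    {a b : ℕ} (hab : a < b) (hb : b < n) : excessSum x A a ≠ excessSum x A b := by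
  intro heq
  have hIco : ∑ j ∈ Ico a b, x (1 + j) = A * (b - a : ℕ) := by
    have := sum_Ico_eq_sub (fun j : ℕ => x (1 + j) - A) hab.le
    change _ = excessSum x A b - excessSum x A a at this
    rw [heq, sub_self, sum_sub_distrib, sum_const, Nat.card_Ico, nsmul_eq_mul, sub_eq_zero] at this
    rw [this, mul_comm]
  have hsub : ∀ m ∈ Ico a b, m < n := fun m hm => by rw [mem_Ico] at hm; omega
  refine hstar.card_smul_sum_ne (s := (Ico a b).attachFin hsub) ?_ ?_ ?_
  · rw [← card_pos, card_attachFin, Nat.card_Ico]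
    omega
  · intro h
    have := congrArg card h
    rw [card_attachFin, card_univ, Fintype.card_fin, Nat.card_Ico] at this
    omega
  · have hsum : ∑ i ∈ (Ico a b).attachFin hsub, x ((i : ℕ) + 1) = ∑ j ∈ Ico a b, x (1 + j) := by
      conv_rhs => rw [← image_val_attachFin hsub, sum_image Fin.val_injective.injOn]
      simp only [add_comm]
    have htotal : ∑ i : Fin n, x ((i : ℕ) + 1) = ∑ j ∈ range n, x (1 + j) := by
      rw [Fin.sum_univ_eq_sum_range (fun j => x (j + 1))]
      simp only [add_comm]
    simp only [hsum, htotal, Rat.smul_def, Rat.cast_natCast, Fintype.card_fin, card_attachFin,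
      Nat.card_Ico, hIco, hmean]
    ring

theorem excessSum_injOn (hstar : StarCond n x) (hmean : ∑ j ∈ range n, x (1 + j) = A * n) :
    Set.InjOn (excessSum x A) (Set.Iio n) := by
  intro a ha b hb hab
  by_contra hne
  rcases Nat.lt_or_gt_of_ne hne with hlt | hgt
  · exact excessSum_ne_of_lt hstar hmean hlt hb hab
  · exact excessSum_ne_of_lt hstar hmean hgt ha hab.symm

end ExcessSum

theorem unique_majorizing_shift_general (n : ℕ) (hn : 1 ≤ n) (x : ℤ → ℝ)
    (hper : ∀ i, x (i + (n : ℤ)) = x i)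
    (hstar : StarCond n x) :
    ∃! i : ℤ, i ∈ Finset.Icc (1 : ℤ) (n : ℤ) ∧
      (∀ k : ℕ, 1 ≤ k → k < n →
        ∑ j ∈ Finset.range k, x (i + (j : ℤ)) <
          ((∑ j ∈ Finset.Icc (1 : ℤ) (n : ℤ), x j) / n) * k) ∧
      ∑ j ∈ Finset.range n, x (i + (j : ℤ)) =
        ((∑ j ∈ Finset.Icc (1 : ℤ) (n : ℤ), x j) / n) * n := by
  set A := (∑ j ∈ Icc (1 : ℤ) n, x j) / n
  have hmean : ∑ j ∈ range n, x (1 + j) = A * n := by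
    rw [← Int.sum_Icc_one_eq_sum_range, div_mul_cancel₀ _ (by positivity)]
  have hcond (r : ℕ) : (∀ k, 1 ≤ k → k < n → ∑ j ∈ range k, x (1 + r + j) < A * k) ↔
      ∀ k, 1 ≤ k → k < n → excessSum x A (r + k) < excessSum x A r := by
    refine forall₃_congr fun k _ _ => ?_
    rw [← sub_neg, ← sub_neg (a := excessSum x A _), excessSum_add_sub]
  obtain ⟨r, ⟨hr, hmax⟩, huniq⟩ := (periodic_excessSum hper hmean).existsUnique_forall_add_lt
    (excessSum_injOn hstar hmean) hn
  refine ⟨1 + r, ⟨by rw [mem_Icc]; omega, (hcond r).2 hmax, ?_⟩, ?_⟩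
  · rw [Periodic.sum_range_comp_add hper, ← Periodic.sum_range_comp_add hper 1, hmean]
  · rintro i ⟨hi, hlt, -⟩
    rw [mem_Icc] at hi
    obtain ⟨s, rfl⟩ : ∃ s : ℕ, i = 1 + s := ⟨(i - 1).toNat, by omega⟩
    rw [huniq s ⟨by omega, (hcond s).1 hlt⟩]

/-- Among the `n` cyclic shifts of `x` there is exactly one index `i* ∈ [1:n]`
such that `Σ_{j=0}^{k−1} x_{i*+j} < ā(x)·k` for `k = 1,…,n−1`, with equality
at `k = n`; i.e. exactly one cyclic shift majorizes the constant tuple. -/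
theorem unique_majorizing_shift (n : ℕ) (hn : 1 ≤ n) (x : ℤ → ℝ)
    (hpos : ∀ i, 0 ≤ x i) (hper : ∀ i, x (i + (n : ℤ)) = x i)
    (hstar : StarCond n x) :
    ∃! i : ℤ, i ∈ Finset.Icc (1 : ℤ) (n : ℤ) ∧
      (∀ k : ℕ, 1 ≤ k → k < n →
        ∑ j ∈ Finset.range k, x (i + (j : ℤ)) <
          ((∑ j ∈ Finset.Icc (1 : ℤ) (n : ℤ), x j) / n) * k) ∧
      ∑ j ∈ Finset.range n, x (i + (j : ℤ)) =
        ((∑ j ∈ Finset.Icc (1 : ℤ) (n : ℤ), x j) / n) * n :=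
  unique_majorizing_shift_general n hn x hper hstar
end
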